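/- arXiv:2103.00896 — 8 statements merged into one kernel-verified Lean document; each statement's English description precedes it below -/
import Mathlib

section
/- Let w, v : ℝ → [0,∞) be Lebesgue-integrable functions with distribution functions W(t) = |{x ∈ ℝ : w(x) > t}| and V(t) = |{x ∈ ℝ : v(x) > t}| (Lebesgue measure of the super-level sets). Suppose there is t₀ > 0 such that W(t) − V(t) ≤ 0 for all t ∈ [0, t₀] and W(t) − V(t) ≥ 0 for all t ∈ [t₀, ∞). Then the function φ(s) = (∫_ℝ (w^s − v^s) dx)/(s·t₀^s) is nondecreasing on the set of s > 0 for which w^s − v^s is integrable: whenever 0 < s' ≤ s and both w^{s'} − v^{s'} and w^s − v^s are integrable, φ(s') ≤ φ(s). In particular, if ∫ w^{s₀} ≥ ∫ v^{s₀} for some such s₀ > 0, then ∫ w^s ≥ ∫ v^s for every s ≥ s₀ in this set. -/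
/-!
Layer cake: for `a ≥ 0`, `a ^ s = ∫_{t>0} s t^(s-1) 𝟙[t < a] dt`. Applying this to `w x` and `v x`
and swapping the integrals gives `∫ (w^s - v^s) = s ∫_{t>0} t^(s-1) (W - V)(t) dt`, so that
`φ(s) = t₀⁻¹ ∫_{t>0} (t/t₀)^(s-1) (W - V)(t) dt`. Since `W - V ≤ 0` where `t/t₀ ≤ 1`
and `W - V ≥ 0` where `t/t₀ ≥ 1`, the integrand is nondecreasing in `s` at every `t`.
Fubini is applied to the difference of the two layer-cake kernels, whose `t`-integral of the
absolute value is `|w^s - v^s|`, so only `w^s - v^s` needs to be integrable.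
-/

open MeasureTheory Real Set

section LayerCake

variable {s : ℝ}

theorem integrableOn_Ioi_indicator_Iio_rpow (hs : 0 < s) (a : ℝ) :
    IntegrableOn ((Iio a).indicator fun t => s * t ^ (s - 1)) (Ioi 0) := by
  rw [IntegrableOn, integrable_indicator_iff measurableSet_Iio, IntegrableOn,
    Measure.restrict_restrict measurableSet_Iio]
  have h : IntervalIntegrable (fun t : ℝ => s * t ^ (s - 1)) volume 0 a :=
    (intervalIntegral.intervalIntegrable_rpow' (by linarith)).const_mul s
  refine (intervalIntegrable_iff.1 h).mono_set fun t ⟨hta, ht0⟩ => ?_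
  exact ⟨lt_of_le_of_lt (min_le_left _ _) ht0, hta.le.trans (le_max_right _ _)⟩

theorem setIntegral_Ioi_indicator_Iio_rpow (hs : 0 < s) {a : ℝ} (ha : 0 ≤ a) :
    ∫ t in Ioi 0, (Iio a).indicator (fun t => s * t ^ (s - 1)) t = a ^ s := by
  rw [setIntegral_indicator measurableSet_Iio, Ioi_inter_Iio, ← integral_Ioc_eq_integral_Ioo,
    ← intervalIntegral.integral_of_le ha, intervalIntegral.integral_const_mul,
    integral_rpow (Or.inl (by linarith)), sub_add_cancel, zero_rpow hs.ne', sub_zero]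
  field_simp

theorem setIntegral_Ioi_indicator_Iio_sub_rpow (hs : 0 < s) {a b : ℝ} (ha : 0 ≤ a) (hb : 0 ≤ b) :
    ∫ t in Ioi 0, (Iio a).indicator (fun t => s * t ^ (s - 1)) t -
      (Iio b).indicator (fun t => s * t ^ (s - 1)) t = a ^ s - b ^ s := by
  rw [integral_sub (integrableOn_Ioi_indicator_Iio_rpow hs a)
    (integrableOn_Ioi_indicator_Iio_rpow hs b), setIntegral_Ioi_indicator_Iio_rpow hs ha,
    setIntegral_Ioi_indicator_Iio_rpow hs hb]

theorem setIntegral_Ioi_norm_indicator_Iio_sub_rpow (hs : 0 < s) {a b : ℝ} (ha : 0 ≤ a)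
    (hb : 0 ≤ b) :
    ∫ t in Ioi 0, ‖(Iio a).indicator (fun t => s * t ^ (s - 1)) t -
      (Iio b).indicator (fun t => s * t ^ (s - 1)) t‖ = ‖a ^ s - b ^ s‖ := by
  wlog hba : b ≤ a generalizing a b
  · simpa only [norm_sub_rev] using this hb ha (le_of_not_ge hba)
  have hnonneg : ∀ t ∈ Ioi (0 : ℝ), 0 ≤ (Iio a).indicator (fun t => s * t ^ (s - 1)) t -
      (Iio b).indicator (fun t => s * t ^ (s - 1)) t := fun t ht => by
    have : 0 ≤ s * t ^ (s - 1) := by have := rpow_pos_of_pos (mem_Ioi.1 ht) (s - 1); positivity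
    by_cases htb : t < b
    · simp [indicator_of_mem, htb, htb.trans_le hba]
    · by_cases hta : t < a <;> simp [htb, hta, this]
  rw [setIntegral_congr_fun measurableSet_Ioi fun t ht => norm_of_nonneg (hnonneg t ht),
    setIntegral_Ioi_indicator_Iio_sub_rpow hs ha hb,
    norm_of_nonneg (sub_nonneg.2 (rpow_le_rpow hb hba hs.le))]

variable {α : Type*} [MeasurableSpace α] {μ : Measure α} {f g : α → ℝ}

theorem integral_indicator_Iio_sub_indicator_Iio (φ : ℝ → ℝ) {t : ℝ} (hf : Measurable f)
    (hg : Measurable g) (hf_fin : μ {x | t < f x} ≠ ⊤) (hg_fin : μ {x | t < g x} ≠ ⊤) :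
    ∫ x, (Iio (f x)).indicator φ t - (Iio (g x)).indicator φ t ∂μ =
      φ t * (μ.real {x | t < f x} - μ.real {x | t < g x}) := by
  have hfs : MeasurableSet {x | t < f x} := measurableSet_lt measurable_const hf
  have hgs : MeasurableSet {x | t < g x} := measurableSet_lt measurable_const hg
  change ∫ x, {x | t < f x}.indicator (fun _ => φ t) x -
    {x | t < g x}.indicator (fun _ => φ t) x ∂μ = _
  rw [integral_sub ((integrable_indicator_iff hfs).2 (integrableOn_const hf_fin))
    ((integrable_indicator_iff hgs).2 (integrableOn_const hg_fin)),
    integral_indicator_const _ hfs, integral_indicator_const _ hgs, smul_eq_mul, smul_eq_mul]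
  ring

theorem integrable_uncurry_indicator_Iio_rpow_sub [SFinite μ] (hs : 0 < s)
    (hf0 : ∀ x, 0 ≤ f x) (hg0 : ∀ x, 0 ≤ g x) (hf : Measurable f) (hg : Measurable g)
    (hfg : Integrable (fun x => f x ^ s - g x ^ s) μ) :
    Integrable (Function.uncurry fun x t => (Iio (f x)).indicator (fun t => s * t ^ (s - 1)) t -
      (Iio (g x)).indicator (fun t => s * t ^ (s - 1)) t) (μ.prod (volume.restrict (Ioi 0))) := by
  have hmeas : ∀ {h : α → ℝ}, Measurable h →
      Measurable fun p : α × ℝ => (Iio (h p.1)).indicator (fun t => s * t ^ (s - 1)) p.2 :=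
    fun hh => ((measurable_snd.pow_const _).const_mul s).indicator
      (measurableSet_lt measurable_snd (hh.comp measurable_fst))
  refine (integrable_prod_iff ((hmeas hf).sub (hmeas hg)).aestronglyMeasurable).2
    ⟨.of_forall fun x => (integrableOn_Ioi_indicator_Iio_rpow hs (f x)).sub
      (integrableOn_Ioi_indicator_Iio_rpow hs (g x)), hfg.norm.congr (.of_forall fun x => ?_)⟩
  exact (setIntegral_Ioi_norm_indicator_Iio_sub_rpow hs (hf0 x) (hg0 x)).symm

theorem integral_rpow_sub_rpow_eq_setIntegral_meas_lt_of_measurable [SFinite μ] (hs : 0 < s)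
    (hf0 : ∀ x, 0 ≤ f x) (hg0 : ∀ x, 0 ≤ g x) (hf : Measurable f) (hg : Measurable g)
    (hf_fin : ∀ t > 0, μ {x | t < f x} ≠ ⊤) (hg_fin : ∀ t > 0, μ {x | t < g x} ≠ ⊤)
    (hfg : Integrable (fun x => f x ^ s - g x ^ s) μ) :
    IntegrableOn (fun t => s * t ^ (s - 1) * (μ.real {x | t < f x} - μ.real {x | t < g x}))
      (Ioi 0) ∧
    ∫ x, f x ^ s - g x ^ s ∂μ =
      ∫ t in Ioi 0, s * t ^ (s - 1) * (μ.real {x | t < f x} - μ.real {x | t < g x}) := by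
  have hF := integrable_uncurry_indicator_Iio_rpow_sub hs hf0 hg0 hf hg hfg
  have hinner : EqOn (fun t => ∫ x, (Iio (f x)).indicator (fun t => s * t ^ (s - 1)) t -
      (Iio (g x)).indicator (fun t => s * t ^ (s - 1)) t ∂μ)
      (fun t => s * t ^ (s - 1) * (μ.real {x | t < f x} - μ.real {x | t < g x})) (Ioi 0) :=
    fun t ht => integral_indicator_Iio_sub_indicator_Iio _ hf hg (hf_fin t ht) (hg_fin t ht)
  refine ⟨IntegrableOn.congr_fun hF.swap.integral_prod_left hinner measurableSet_Ioi, ?_⟩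
  calc ∫ x, f x ^ s - g x ^ s ∂μ
      = ∫ x, (∫ t in Ioi (0 : ℝ), (Iio (f x)).indicator (fun t => s * t ^ (s - 1)) t -
          (Iio (g x)).indicator (fun t => s * t ^ (s - 1)) t) ∂μ :=
        integral_congr_ae (.of_forall fun x =>
          (setIntegral_Ioi_indicator_Iio_sub_rpow hs (hf0 x) (hg0 x)).symm)
    _ = _ := integral_integral_swap hF
    _ = _ := setIntegral_congr_fun measurableSet_Ioi hinner

theorem integral_rpow_sub_rpow_eq_setIntegral_meas_lt [SFinite μ] (hs : 0 < s)
    (hf0 : 0 ≤ᵐ[μ] f) (hg0 : 0 ≤ᵐ[μ] g) (hf : AEMeasurable f μ) (hg : AEMeasurable g μ)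
    (hf_fin : ∀ t > 0, μ {x | t < f x} ≠ ⊤) (hg_fin : ∀ t > 0, μ {x | t < g x} ≠ ⊤)
    (hfg : Integrable (fun x => f x ^ s - g x ^ s) μ) :
    IntegrableOn (fun t => s * t ^ (s - 1) * (μ.real {x | t < f x} - μ.real {x | t < g x}))
      (Ioi 0) ∧
    ∫ x, f x ^ s - g x ^ s ∂μ =
      ∫ t in Ioi 0, s * t ^ (s - 1) * (μ.real {x | t < f x} - μ.real {x | t < g x}) := by
  obtain ⟨f', hf'm, hf'0, hff'⟩ := hf.exists_measurable_nonneg hf0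
  obtain ⟨g', hg'm, hg'0, hgg'⟩ := hg.exists_measurable_nonneg hg0
  have hlevel : ∀ {h h' : α → ℝ}, h =ᵐ[μ] h' → ∀ t, {x | t < h' x} =ᵐ[μ] {x | t < h x} :=
    fun hh t => hh.mono fun x hx => show (t < _) = (t < _) by rw [hx]
  have hpow : (fun x => f x ^ s - g x ^ s) =ᵐ[μ] fun x => f' x ^ s - g' x ^ s := by
    filter_upwards [hff', hgg'] with x hfx hgx
    rw [hfx, hgx]
  have key := integral_rpow_sub_rpow_eq_setIntegral_meas_lt_of_measurable hs hf'0 hg'0 hf'm hg'm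
    (fun t ht => measure_congr (hlevel hff' t) ▸ hf_fin t ht)
    (fun t ht => measure_congr (hlevel hgg' t) ▸ hg_fin t ht) (hfg.congr hpow)
  simp only [measureReal_congr (hlevel hff' _), measureReal_congr (hlevel hgg' _)] at key
  rwa [integral_congr_ae hpow]

end LayerCake

theorem rpow_mul_le_rpow_mul_of_sign_change {r d σ' σ : ℝ} (hr : 0 < r) (hd₁ : r ≤ 1 → d ≤ 0)
    (hd₂ : 1 ≤ r → 0 ≤ d) (hσ : σ' ≤ σ) : r ^ σ' * d ≤ r ^ σ * d := by
  rcases le_total r 1 with h | h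
  · exact mul_le_mul_of_nonpos_right (rpow_le_rpow_of_exponent_ge hr h hσ) (hd₁ h)
  · exact mul_le_mul_of_nonneg_right (rpow_le_rpow_of_exponent_le h hσ) (hd₂ h)

theorem setIntegral_rpow_mul_div_le_of_sign_change {D : ℝ → ℝ} {t₀ s' s : ℝ} (ht₀ : 0 < t₀)
    (hs' : 0 < s') (hss : s' ≤ s) (hD₁ : ∀ t ∈ Ioc 0 t₀, D t ≤ 0) (hD₂ : ∀ t ∈ Ici t₀, 0 ≤ D t)
    (hi' : IntegrableOn (fun t => s' * t ^ (s' - 1) * D t) (Ioi 0))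
    (hi : IntegrableOn (fun t => s * t ^ (s - 1) * D t) (Ioi 0)) :
    (∫ t in Ioi 0, s' * t ^ (s' - 1) * D t) / (s' * t₀ ^ s') ≤
      (∫ t in Ioi 0, s * t ^ (s - 1) * D t) / (s * t₀ ^ s) := by
  have hrescale : ∀ σ, 0 < σ → EqOn (fun t => σ * t ^ (σ - 1) * D t / (σ * t₀ ^ σ))
      (fun t => (t / t₀) ^ (σ - 1) * D t / t₀) (Ioi 0) := fun σ hσ t ht => by
    dsimp only
    rw [div_rpow (le_of_lt ht) ht₀.le, rpow_sub_one ht₀.ne']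
    field_simp
  have hs : 0 < s := hs'.trans_le hss
  rw [← integral_div, ← integral_div, setIntegral_congr_fun measurableSet_Ioi (hrescale s' hs'),
    setIntegral_congr_fun measurableSet_Ioi (hrescale s hs)]
  refine setIntegral_mono_on
    (IntegrableOn.congr_fun (hi'.div_const _) (hrescale s' hs') measurableSet_Ioi)
    (IntegrableOn.congr_fun (hi.div_const _) (hrescale s hs) measurableSet_Ioi)
    measurableSet_Ioi fun t (ht : 0 < t) => ?_
  refine div_le_div_of_nonneg_right (rpow_mul_le_rpow_mul_of_sign_change (div_pos ht ht₀)
    (fun h => hD₁ t ⟨ht, ?_⟩) (fun h => hD₂ t ?_) (sub_le_sub_right hss 1)) ht₀.le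
  · exact (div_le_one ht₀).1 h
  · exact (one_le_div ht₀).1 h

/-- **Nazarov–Podkorytov trick.**
Let `w, v : ℝ → [0,∞)` be Lebesgue-integrable, with distribution functions
`W(t) = |{x : w(x) > t}|` and `V(t) = |{x : v(x) > t}|`.  If there is `t₀ > 0` with
`W − V ≤ 0` on `[0, t₀]` and `W − V ≥ 0` on `[t₀, ∞)`, then
`φ(s) = (∫ (w^s − v^s))/(s t₀^s)` is nondecreasing on the set of `s > 0` where
`w^s − v^s` is integrable; in particular if `∫ w^{s₀} ≥ ∫ v^{s₀}` for some such `s₀`,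
then `∫ w^s ≥ ∫ v^s` for all `s ≥ s₀` in this set. -/
theorem nazarov_podkorytov_trick
    (w v : ℝ → ℝ) (hw0 : ∀ x, 0 ≤ w x) (hv0 : ∀ x, 0 ≤ v x)
    (hwint : Integrable w) (hvint : Integrable v)
    (W V : ℝ → ℝ)
    (hW : ∀ t, W t = (volume {x : ℝ | t < w x}).toReal)
    (hV : ∀ t, V t = (volume {x : ℝ | t < v x}).toReal)
    (t₀ : ℝ) (ht₀ : 0 < t₀)
    (h₁ : ∀ t ∈ Icc (0:ℝ) t₀, W t - V t ≤ 0)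
    (h₂ : ∀ t ∈ Ici t₀, 0 ≤ W t - V t) :
    (∀ s' s : ℝ, 0 < s' → s' ≤ s →
        Integrable (fun x => w x ^ s' - v x ^ s') →
        Integrable (fun x => w x ^ s - v x ^ s) →
        (∫ x, (w x ^ s' - v x ^ s')) / (s' * t₀ ^ s') ≤
          (∫ x, (w x ^ s - v x ^ s)) / (s * t₀ ^ s)) ∧
    (∀ s₀ s : ℝ, 0 < s₀ → s₀ ≤ s →
        Integrable (fun x => w x ^ s₀ - v x ^ s₀) →
        Integrable (fun x => w x ^ s - v x ^ s) →
        Integrable (fun x => w x ^ s₀) → Integrable (fun x => v x ^ s₀) →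
        Integrable (fun x => w x ^ s) → Integrable (fun x => v x ^ s) →
        (∫ x, v x ^ s₀) ≤ (∫ x, w x ^ s₀) →
        (∫ x, v x ^ s) ≤ (∫ x, w x ^ s)) := by
  have hlayer : ∀ σ, 0 < σ → Integrable (fun x => w x ^ σ - v x ^ σ) →
      IntegrableOn (fun t => σ * t ^ (σ - 1) * (W t - V t)) (Ioi 0) ∧
      ∫ x, w x ^ σ - v x ^ σ = ∫ t in Ioi 0, σ * t ^ (σ - 1) * (W t - V t) := fun σ hσ hI => by
    have key := integral_rpow_sub_rpow_eq_setIntegral_meas_lt hσ (.of_forall hw0) (.of_forall hv0)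
      hwint.aemeasurable hvint.aemeasurable (fun t ht => (hwint.measure_gt_lt_top ht).ne)
      (fun t ht => (hvint.measure_gt_lt_top ht).ne) hI
    simpa only [measureReal_def, ← hW, ← hV] using key
  have hmono : ∀ s' s : ℝ, 0 < s' → s' ≤ s →
      Integrable (fun x => w x ^ s' - v x ^ s') → Integrable (fun x => w x ^ s - v x ^ s) →
      (∫ x, (w x ^ s' - v x ^ s')) / (s' * t₀ ^ s') ≤
        (∫ x, (w x ^ s - v x ^ s)) / (s * t₀ ^ s) := fun s' s hs' hss hI' hI => by
    obtain ⟨hi', he'⟩ := hlayer s' hs' hI'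
    obtain ⟨hi, he⟩ := hlayer s (hs'.trans_le hss) hI
    rw [he', he]
    exact setIntegral_rpow_mul_div_le_of_sign_change ht₀ hs' hss
      (fun t ht => h₁ t (Ioc_subset_Icc_self ht)) h₂ hi' hi
  refine ⟨hmono, fun s₀ s hs₀ hss hI₀ hI hw₀ hv₀ hws hvs hbase => ?_⟩
  have hratio : 0 ≤ (∫ x, w x ^ s - v x ^ s) / (s * t₀ ^ s) :=
    (div_nonneg (by rw [integral_sub hw₀ hv₀]; linarith) (by positivity)).trans
      (hmono s₀ s hs₀ hss hI₀ hI)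
  have hs : 0 < s := hs₀.trans_le hss
  rwa [le_div_iff₀ (by positivity), zero_mul, integral_sub hws hvs, sub_nonneg] at hratio
end

section
/- For λ ∈ (0, 1/2], the function t ↦ exp(−3λt²/(2π²)) − √((1−λ) + λ·cos t) has at most one zero in the interval (0, π]. -/
/-!
Squaring turns a zero of the given function into a zero of
`g t = exp (-3λt²/π²) - (1 - λ + λ cos t)`, which also vanishes at `0`. By Rolle, two zeros in
`(0, π]` would give two critical points of `g` in `(0, π)`. But `g' x = 0` means
`log (sin x / x) + 3λx²/π² = log (6/π²)`, and the left side is strictly decreasing on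
`(0, π)` since `t cot t ≤ 1 - t²/3` there and `6λ/π² < 1/3`.
-/

open Real Set

theorem mul_cos_le_sin {t : ℝ} (h0 : 0 ≤ t) (hπ : t ≤ π) : t * cos t ≤ sin t := by
  let f (s : ℝ) : ℝ := sin s - s * cos s
  have hderiv (s : ℝ) : deriv f s = s * sin s := by
    simp (disch := fun_prop) [f]
  have hmono : MonotoneOn f (Icc 0 π) := by
    apply monotoneOn_of_deriv_nonneg (convex_Icc 0 π) (by fun_prop) (by fun_prop)
    intro s hs
    rw [interior_Icc] at hs
    rw [hderiv]
    exact mul_nonneg hs.1.le (sin_nonneg_of_nonneg_of_le_pi hs.1.le hs.2.le)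
  have := hmono ⟨le_rfl, pi_pos.le⟩ ⟨h0, hπ⟩ h0
  simp only [f, sin_zero, zero_mul, sub_zero] at this
  linarith

theorem mul_cos_le_sin_mul_one_sub_sq_div_three {t : ℝ} (h0 : 0 ≤ t) (hπ : t ≤ π) :
    t * cos t ≤ sin t * (1 - t ^ 2 / 3) := by
  let f (s : ℝ) : ℝ := sin s * (1 - s ^ 2 / 3) - s * cos s
  have hderiv (s : ℝ) : deriv f s = s / 3 * (sin s - s * cos s) := by
    simp (disch := fun_prop) [f]
    ring
  have hmono : MonotoneOn f (Icc 0 π) := by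
    apply monotoneOn_of_deriv_nonneg (convex_Icc 0 π) (by fun_prop) (by fun_prop)
    intro s hs
    rw [interior_Icc] at hs
    rw [hderiv]
    exact mul_nonneg (by linarith [hs.1]) (sub_nonneg.2 (mul_cos_le_sin hs.1.le hs.2.le))
  have := hmono ⟨le_rfl, pi_pos.le⟩ ⟨h0, hπ⟩ h0
  simp only [f, sin_zero, zero_mul, sub_zero] at this
  linarith

theorem subsingleton_zeros_of_subsingleton_deriv_zeros {f : ℝ → ℝ} {a b : ℝ}
    (hf : ContinuousOn f (Icc a b)) (hfa : f a = 0)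
    (hf' : {x ∈ Ioo a b | deriv f x = 0}.Subsingleton) :
    {t ∈ Ioc a b | f t = 0}.Subsingleton := by
  rintro s ⟨hs, hfs⟩ t ⟨ht, hft⟩
  by_contra hne
  wlog hst : s < t generalizing s t
  · exact this ht hft hs hfs (Ne.symm hne) ((not_lt.1 hst).lt_of_ne (Ne.symm hne))
  obtain ⟨x, hx, hx'⟩ := exists_deriv_eq_zero hs.1
    (hf.mono (Icc_subset_Icc le_rfl hs.2)) (hfa.trans hfs.symm)
  obtain ⟨y, hy, hy'⟩ := exists_deriv_eq_zero hst
    (hf.mono (Icc_subset_Icc hs.1.le ht.2)) (hfs.trans hft.symm)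
  exact (hx.2.trans hy.1).ne <|
    hf' ⟨⟨hx.1, hx.2.trans_le hs.2⟩, hx'⟩ ⟨⟨hs.1.trans hy.1, hy.2.trans_le ht.2⟩, hy'⟩

section

variable (lam : ℝ)

noncomputable def expCosGap (t : ℝ) : ℝ :=
  exp (-(3 * lam * t ^ 2) / π ^ 2) - ((1 - lam) + lam * cos t)

noncomputable def logSincAddQuad (t : ℝ) : ℝ :=
  log (sin t) - log t + 3 * lam * t ^ 2 / π ^ 2

theorem expCosGap_zero : expCosGap lam 0 = 0 := by
  simp [expCosGap]

theorem continuous_expCosGap : Continuous (expCosGap lam) := by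
  unfold expCosGap
  fun_prop

theorem deriv_expCosGap (t : ℝ) :
    deriv (expCosGap lam) t =
      lam * sin t - 6 * lam * t / π ^ 2 * exp (-(3 * lam * t ^ 2) / π ^ 2) := by
  unfold expCosGap
  simp (disch := fun_prop)
  ring

theorem expCosGap_eq_zero {t : ℝ}
    (h : exp (-(3 * lam * t ^ 2) / (2 * π ^ 2)) - √((1 - lam) + lam * cos t) = 0) :
    expCosGap lam t = 0 := by
  set e := exp (-(3 * lam * t ^ 2) / (2 * π ^ 2))
  have hsqrt : √((1 - lam) + lam * cos t) = e := (sub_eq_zero.1 h).symm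
  have hpos : 0 < (1 - lam) + lam * cos t := sqrt_pos.1 (hsqrt ▸ exp_pos _)
  have hsq : e ^ 2 = exp (-(3 * lam * t ^ 2) / π ^ 2) := by
    rw [← exp_nat_mul]
    congr 1
    field_simp
    push_cast
    ring
  rw [expCosGap, ← hsq, ← hsqrt, sq_sqrt hpos.le, sub_self]

theorem hasDerivAt_logSincAddQuad {t : ℝ} (ht : t ∈ Ioo 0 π) :
    HasDerivAt (logSincAddQuad lam) (cos t / sin t - t⁻¹ + 6 * lam * t / π ^ 2) t := by
  have hsin : sin t ≠ 0 := (sin_pos_of_pos_of_lt_pi ht.1 ht.2).ne'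
  have hquad : HasDerivAt (fun s ↦ 3 * lam * s ^ 2 / π ^ 2) (6 * lam * t / π ^ 2) t := by
    refine (((hasDerivAt_pow 2 t).const_mul (3 * lam)).div_const (π ^ 2)).congr_deriv ?_
    norm_num
    ring
  exact (((hasDerivAt_sin t).log hsin).sub (hasDerivAt_log ht.1.ne')).add hquad

theorem strictAntiOn_logSincAddQuad {lam : ℝ} (hlam : lam ≤ 1 / 2) :
    StrictAntiOn (logSincAddQuad lam) (Ioo 0 π) := by
  refine strictAntiOn_of_deriv_neg (convex_Ioo 0 π)
    (fun t ht ↦ (hasDerivAt_logSincAddQuad lam ht).continuousAt.continuousWithinAt) ?_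
  intro t ht
  rw [interior_Ioo] at ht
  rw [(hasDerivAt_logSincAddQuad lam ht).deriv]
  have hsin : 0 < sin t := sin_pos_of_pos_of_lt_pi ht.1 ht.2
  have hcot : cos t / sin t ≤ t⁻¹ - t / 3 := by
    rw [show t⁻¹ - t / 3 = (1 - t ^ 2 / 3) / t by field_simp, div_le_div_iff₀ hsin ht.1]
    linarith [mul_cos_le_sin_mul_one_sub_sq_div_three ht.1.le ht.2.le]
  have hquad : 6 * lam * t / π ^ 2 < t / 3 := by
    rw [div_lt_iff₀ (by positivity)]
    have hπ : 9 < π ^ 2 := by nlinarith [pi_gt_three]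
    nlinarith [mul_le_mul_of_nonneg_right hlam ht.1.le, mul_lt_mul_of_pos_right hπ ht.1]
  linarith

theorem logSincAddQuad_eq_of_deriv_expCosGap_eq_zero {lam : ℝ} (hlam : lam ≠ 0) {x : ℝ}
    (hx : x ∈ Ioo 0 π) (hx' : deriv (expCosGap lam) x = 0) :
    logSincAddQuad lam x = log (6 / π ^ 2) := by
  rw [deriv_expCosGap, sub_eq_zero] at hx'
  have hsin : sin x = 6 / π ^ 2 * x * exp (-(3 * lam * x ^ 2) / π ^ 2) := by
    apply mul_left_cancel₀ hlam
    rw [hx']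
    ring
  rw [logSincAddQuad, hsin, log_mul (mul_pos (by positivity) hx.1).ne' (exp_pos _).ne',
    log_exp, log_mul (by positivity) hx.1.ne']
  ring

end

/-- For `λ ∈ (0, 1/2]`, the function
`t ↦ exp(−3λt²/(2π²)) − √((1−λ) + λ·cos t)` has at most one zero in `(0, π]`. -/
theorem at_most_one_zero (lam : ℝ) (hlam0 : 0 < lam) (hlam : lam ≤ 1 / 2) :
    Set.Subsingleton {t ∈ Set.Ioc (0:ℝ) π |
      Real.exp (-(3 * lam * t ^ 2) / (2 * π ^ 2)) -
        Real.sqrt ((1 - lam) + lam * Real.cos t) = 0} := by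
  have hcrit : {x ∈ Ioo 0 π | deriv (expCosGap lam) x = 0}.Subsingleton :=
    fun x hx y hy ↦ (strictAntiOn_logSincAddQuad hlam).injOn hx.1 hy.1 <|
      (logSincAddQuad_eq_of_deriv_expCosGap_eq_zero hlam0.ne' hx.1 hx.2).trans
        (logSincAddQuad_eq_of_deriv_expCosGap_eq_zero hlam0.ne' hy.1 hy.2).symm
  refine (subsingleton_zeros_of_subsingleton_deriv_zeros (continuous_expCosGap lam).continuousOn
    (expCosGap_zero lam) hcrit).anti ?_
  exact fun t ht ↦ ⟨ht.1, expCosGap_eq_zero lam ht.2⟩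
end

section
/- For every z > 0, (1/z) ∫_0^z e^{−t²/2} dt ≤ min{ (1 + z²/3)^{−1/2}, √(π/(2z²)) }. -/
/-!
The bound `(1 + z²/3)^{-1/2}` comes from comparing integrands: `1 + t²/3 ≤ exp (t²/3)`
gives `exp (-t²/2) ≤ (1 + t²/3)^{-3/2}`, and `t ↦ t (1 + t²/3)^{-1/2}` is an explicit antiderivative
of the right-hand side. The bound `√(π/(2z²))` is the half-line Gaussian integral `√(π/2)`
divided by `z`.
-/

open Real MeasureTheory

lemma exp_neg_mul_le_one_add_rpow_neg {x p : ℝ} (hx : 0 < 1 + x) (hp : 0 ≤ p) :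
    exp (-(p * x)) ≤ (1 + x) ^ (-p) := by
  have hle : (1 + x) ^ p ≤ exp (p * x) :=
    calc (1 + x) ^ p ≤ exp x ^ p := rpow_le_rpow hx.le (by linarith [add_one_le_exp x]) hp
      _ = exp (p * x) := by rw [← exp_mul, mul_comm]
  rw [exp_neg, rpow_neg hx.le]
  exact inv_anti₀ (rpow_pos_of_pos hx p) hle

section Antiderivative

variable {a : ℝ} (ha : 0 < a)
include ha

lemma one_add_sq_div_pos (t : ℝ) : 0 < 1 + t ^ 2 / a := by positivity

lemma hasDerivAt_mul_one_add_sq_div_rpow (t : ℝ) :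
    HasDerivAt (fun t : ℝ => t * (1 + t ^ 2 / a) ^ (-(1:ℝ) / 2))
      ((1 + t ^ 2 / a) ^ (-(3:ℝ) / 2)) t := by
  have hu := one_add_sq_div_pos ha t
  have hinner : HasDerivAt (fun t : ℝ => 1 + t ^ 2 / a) (2 * t / a) t := by
    simpa using ((hasDerivAt_pow 2 t).div_const a).const_add 1
  refine ((hasDerivAt_id t).mul
    (hinner.rpow_const (p := -(1:ℝ) / 2) (Or.inl hu.ne'))).congr_deriv ?_
  have hsplit : (1 + t ^ 2 / a) ^ (-(1:ℝ) / 2) =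
      (1 + t ^ 2 / a) ^ (-(3:ℝ) / 2) * (1 + t ^ 2 / a) := by
    rw [← rpow_add_one hu.ne']; norm_num
  rw [show -(1:ℝ) / 2 - 1 = -(3:ℝ) / 2 by norm_num, hsplit, id_eq]
  field_simp
  ring

lemma continuous_one_add_sq_div_rpow (p : ℝ) : Continuous fun t : ℝ => (1 + t ^ 2 / a) ^ p :=
  (by fun_prop : Continuous fun t : ℝ => 1 + t ^ 2 / a).rpow_const
    fun t => Or.inl (one_add_sq_div_pos ha t).ne'

lemma integral_one_add_sq_div_rpow (z : ℝ) :
    ∫ t in (0:ℝ)..z, (1 + t ^ 2 / a) ^ (-(3:ℝ) / 2) =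
      z * (1 + z ^ 2 / a) ^ (-(1:ℝ) / 2) := by
  simpa using intervalIntegral.integral_eq_sub_of_hasDerivAt
    (fun t _ => hasDerivAt_mul_one_add_sq_div_rpow ha t)
    ((continuous_one_add_sq_div_rpow ha _).intervalIntegrable 0 z)

end Antiderivative

lemma integral_exp_neg_sq_div_two_le_rpow {z : ℝ} (hz : 0 ≤ z) :
    ∫ t in (0:ℝ)..z, exp (-t ^ 2 / 2) ≤ z * (1 + z ^ 2 / 3) ^ (-(1:ℝ) / 2) := by
  have h3 : (0:ℝ) < 3 := by norm_num
  rw [← integral_one_add_sq_div_rpow h3]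
  refine intervalIntegral.integral_mono_on hz
    ((by fun_prop : Continuous fun t : ℝ => exp (-t ^ 2 / 2)).intervalIntegrable 0 z)
    ((continuous_one_add_sq_div_rpow h3 _).intervalIntegrable 0 z) fun t _ => ?_
  convert exp_neg_mul_le_one_add_rpow_neg (one_add_sq_div_pos h3 t)
    (by norm_num : (0:ℝ) ≤ 3 / 2) using 2 <;> ring

lemma integral_exp_neg_mul_sq_le_half {b z : ℝ} (hb : 0 < b) (hz : 0 ≤ z) :
    ∫ t in (0:ℝ)..z, exp (-b * t ^ 2) ≤ √(π / b) / 2 := by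
  rw [← integral_gaussian_Ioi, intervalIntegral.integral_of_le hz]
  exact setIntegral_mono_set (integrable_exp_neg_mul_sq hb).integrableOn
    (.of_forall fun t => (exp_pos _).le) Set.Ioc_subset_Ioi_self.eventuallyLE

lemma integral_exp_neg_sq_div_two_le {z : ℝ} (hz : 0 ≤ z) :
    ∫ t in (0:ℝ)..z, exp (-t ^ 2 / 2) ≤ √(π / 2) := by
  have h := integral_exp_neg_mul_sq_le_half (by norm_num : (0:ℝ) < 1 / 2) hz
  have hsqrt : √(π / (1 / 2)) = 2 * √(π / 2) := by
    rw [show π / (1 / 2) = 2 ^ 2 * (π / 2) by ring, sqrt_mul (by positivity),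
      sqrt_sq (by norm_num)]
  simp_rw [hsqrt, show ∀ t : ℝ, -(1 / 2) * t ^ 2 = -t ^ 2 / 2 from fun t => by ring] at h
  linarith

/-- For every `z > 0`,
`(1/z) ∫_0^z e^{−t²/2} dt ≤ min { (1 + z²/3)^{−1/2}, √(π/(2z²)) }`. -/
theorem gaussian_integral_bound (z : ℝ) (hz : 0 < z) :
    (1 / z) * ∫ t in (0:ℝ)..z, Real.exp (-t ^ 2 / 2) ≤
      min ((1 + z ^ 2 / 3) ^ (-(1:ℝ) / 2)) (Real.sqrt (π / (2 * z ^ 2))) := by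
  rw [le_min_iff, one_div, inv_mul_le_iff₀ hz, inv_mul_le_iff₀ hz]
  constructor
  · exact integral_exp_neg_sq_div_two_le_rpow hz.le
  · have hsqrt : √(π / (2 * z ^ 2)) = √(π / 2) / z := by
      rw [show π / (2 * z ^ 2) = (π / 2) / z ^ 2 by ring, sqrt_div (by positivity), sqrt_sq hz.le]
    rw [hsqrt, mul_div_cancel₀ _ hz.ne']
    exact integral_exp_neg_sq_div_two_le hz.le
end

section
/- Let α ≥ 2 be real, and let X be a Bernoulli random variable with parameter θ ∈ [0,1]. Then Δ_α(X) ≤ 12·Var(X) = 12·θ(1−θ), with equality when θ = 1/2. -/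
open MeasureTheory ProbabilityTheory Real

/-- `Δ_α(X) = (Σ_{n∈ℤ} P(X=n)^α)^{2/(1−α)} − 1` for an integer-valued random
variable and `α ∈ (1,∞)`. -/
noncomputable def DeltaAlpha {Ω : Type*} [MeasureSpace Ω] (α : ℝ) (X : Ω → ℤ) : ℝ :=
  (∑' n : ℤ, (ℙ {ω | X ω = n}).toReal ^ α) ^ (2 / (1 - α)) - 1

lemma key_ineq (α θ : ℝ) (hα : 2 ≤ α) (hθ0 : 0 ≤ θ) (hθ1 : θ ≤ 1) :
    ((1 - θ) ^ α + θ ^ α) ^ (2 / (1 - α)) ≤ 1 + 12 * (θ * (1 - θ)) := by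
  set p : ℝ := α - 1 with hp
  have hp1 : (1 : ℝ) ≤ p := by simp [hp]; linarith
  have h1θ : (0:ℝ) ≤ 1 - θ := by linarith
  set q : ℝ := θ * θ + (1 - θ) * (1 - θ) with hq
  have hq0 : (0:ℝ) < q := by nlinarith
  -- Jensen: q ^ p ≤ θ * θ^p + (1-θ) * (1-θ)^p
  have hJ := (convexOn_rpow hp1).2 (Set.mem_Ici.2 hθ0) (Set.mem_Ici.2 h1θ) hθ0 h1θ (by ring)
  simp only [smul_eq_mul] at hJ
  have hθα : θ * θ ^ p = θ ^ α := by
    rw [show α = 1 + p by ring, Real.rpow_add' hθ0 (by rw [hp]; intro h; linarith),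
      Real.rpow_one]
  have h1θα : (1 - θ) * (1 - θ) ^ p = (1 - θ) ^ α := by
    rw [show α = 1 + p by ring, Real.rpow_add' h1θ (by rw [hp]; intro h; linarith),
      Real.rpow_one]
  rw [hθα, h1θα] at hJ
  have hqp : (0:ℝ) < q ^ p := Real.rpow_pos_of_pos hq0 p
  have hexp : 2 / (1 - α) ≤ 0 := by
    apply div_nonpos_of_nonneg_of_nonpos <;> linarith
  have h2 : ((1 - θ) ^ α + θ ^ α) ^ (2 / (1 - α)) ≤ (q ^ p) ^ (2 / (1 - α)) := by
    apply Real.rpow_le_rpow_of_nonpos hqp (by linarith) hexp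
  have h3 : (q ^ p) ^ (2 / (1 - α)) = q ^ (-2 : ℝ) := by
    rw [← Real.rpow_mul hq0.le]
    congr 1
    have hne : (1:ℝ) - α ≠ 0 := by intro h; linarith
    field_simp [hp]
    ring
  refine h2.trans (h3 ▸ ?_)
  rw [Real.rpow_neg hq0.le, show ((2:ℝ)) = ((2:ℕ):ℝ) by norm_num, Real.rpow_natCast]
  rw [inv_le_iff_one_le_mul₀ (by positivity), hq]
  have ht0 : 0 ≤ θ*(1-θ) := mul_nonneg hθ0 h1θ
  have ht4 : θ*(1-θ) ≤ 1/4 := by nlinarith [sq_nonneg (1-2*θ)]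
  nlinarith [mul_nonneg (mul_nonneg ht0 (by linarith : (0:ℝ) ≤ 1 - 4*(θ*(1-θ)))) (by linarith : (0:ℝ) ≤ 2 - 3*(θ*(1-θ)))]

lemma key_eq (α : ℝ) (hα : 2 ≤ α) :
    (((1:ℝ)/2) ^ α + ((1:ℝ)/2) ^ α) ^ (2 / (1 - α)) = 4 := by
  have hne : (1:ℝ) - α ≠ 0 := by intro h; linarith
  have h1 : ((1:ℝ)/2) ^ α + ((1:ℝ)/2) ^ α = (2:ℝ) ^ (1 - α) := by
    have : ((1:ℝ)/2) ^ α = (2:ℝ) ^ (-α) := by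
      rw [one_div, Real.inv_rpow (by norm_num), ← Real.rpow_neg (by norm_num)]
    rw [this, ← two_mul, show (1:ℝ) - α = 1 + -α by ring,
      Real.rpow_add (by norm_num), Real.rpow_one]
  rw [h1, ← Real.rpow_mul (by norm_num : (0:ℝ) ≤ 2), mul_div_cancel₀ _ hne]
  rw [show ((2:ℝ)) = ((2:ℕ):ℝ) by norm_num, Real.rpow_natCast]
  norm_num

/-- For real `α ≥ 2` and a Bernoulli random variable `X` with
parameter `θ ∈ [0,1]` (so `P(X=1) = θ`, `P(X=0) = 1−θ`), one has
`Δ_α(X) ≤ 12·Var(X) = 12·θ(1−θ)`, with equality when `θ = 1/2`. -/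
theorem deltaAlpha_bernoulli_le_variance
    {Ω : Type*} [MeasureSpace Ω] [IsProbabilityMeasure (ℙ : Measure Ω)]
    (α : ℝ) (hα : 2 ≤ α)
    (X : Ω → ℤ) (hXm : Measurable X) (hX01 : ∀ ω, X ω = 0 ∨ X ω = 1)
    (θ : ℝ) (hθ0 : 0 ≤ θ) (hθ1 : θ ≤ 1)
    (hθ : (ℙ {ω | X ω = 1}).toReal = θ) :
    DeltaAlpha α X ≤ 12 * (θ * (1 - θ)) ∧
      (θ = 1 / 2 → DeltaAlpha α X = 12 * (θ * (1 - θ))) := by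
  have hcompl : {ω | X ω = 0} = {ω | X ω = 1}ᶜ := by
    ext ω
    simp only [Set.mem_setOf_eq, Set.mem_compl_iff]
    have := hX01 ω
    omega
  have hm1 : MeasurableSet {ω | X ω = 1} := hXm (measurableSet_singleton 1)
  have hp0 : (ℙ {ω | X ω = 0}).toReal = 1 - θ := by
    rw [hcompl, prob_compl_eq_one_sub hm1,
      ENNReal.toReal_sub_of_le prob_le_one ENNReal.one_ne_top, ENNReal.toReal_one, hθ]
  have hsum : (∑' n : ℤ, (ℙ {ω | X ω = n}).toReal ^ α) = (1 - θ) ^ α + θ ^ α := by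
    rw [tsum_eq_sum (s := ({0, 1} : Finset ℤ)) ?_]
    · rw [Finset.sum_pair (by norm_num : (0:ℤ) ≠ 1), hp0, hθ]
    · intro n hn
      have hempty : {ω | X ω = n} = ∅ := by
        ext ω
        simp only [Set.mem_setOf_eq, Set.mem_empty_iff_false, iff_false]
        intro h
        have := hX01 ω
        simp only [Finset.mem_insert, Finset.mem_singleton] at hn
        omega
      rw [hempty, measure_empty]
      simp only [ENNReal.toReal_zero]
      exact Real.zero_rpow (by linarith)
  have hD : DeltaAlpha α X = ((1 - θ) ^ α + θ ^ α) ^ (2 / (1 - α)) - 1 := by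
    unfold DeltaAlpha
    rw [hsum]
  constructor
  · rw [hD]
    linarith [key_ineq α θ hα hθ0 hθ1]
  · intro h
    subst h
    rw [hD]
    norm_num
    rw [key_eq α hα]
    norm_num
end

section
/- Let m, n be natural numbers, α ∈ (1,∞), and C_1, …, C_n real numbers with 1 < C_i ≤ m+1. Let X_1, …, X_n be mutually independent random variables taking values in {0,1,…,m} with P(X_i = k) ≤ 1/C_i for all k and all i. Then there exist mutually independent random variables Z_1, …, Z_n taking values in {0,1,…,m} such that for each i the probability mass function of Z_i has the form f_{Z_i} = (1/C_i)·1_A + (1 − ⌊C_i⌋/C_i)·1_{{x}} for some set A ⊆ {0,…,m} with |A| = ⌊C_i⌋ and some x ∈ {0,…,m} \ A (the second term vanishing when C_i is an integer), and H_α(X_1 + ⋯ + X_n) ≥ H_α(Z_1 + ⋯ + Z_n). -/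
open MeasureTheory ProbabilityTheory Real

/-- The Rényi entropy `H_α(X) = (1−α)⁻¹ log Σ_{n∈ℤ} P(X=n)^α` of an integer-valued
random variable `X`, with respect to an explicitly given measure `μ`. -/
noncomputable def renyiEntropyM {Ω : Type*} [MeasurableSpace Ω] (μ : Measure Ω)
    (α : ℝ) (X : Ω → ℤ) : ℝ :=
  (1 - α)⁻¹ * Real.log (∑' n : ℤ, (μ {ω | X ω = n}).toReal ^ α)

/-!
The map `(p_1, …, p_n) ↦ ∑_s P(X_1 + ⋯ + X_n = s)^α` is convex in each marginal `p_i`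
separately: the law of the sum is multilinear in the marginals and `t ↦ t^α` is convex for
`α ≥ 1`. The admissible marginals form a polytope (pmfs on `{0, …, m}` with all masses at most
`1/C_i`) which is the convex hull of the pmfs of the stated form: a point with two masses
strictly between `0` and `1/C_i` is interior to a segment, obtained by moving mass between
these two, whose endpoints have fewer such masses. Replacing the marginals one at a time by
such extreme points does not decrease the power sum, hence, as `1 - α < 0`, does not increase
`H_α`.
-/

open Finset Function

section Polytope

variable {β : Type*} (S : Finset β) (C : ℝ)

def boundedPMFs : Set (β → ℝ) :=
  {f | (∀ k, 0 ≤ f k) ∧ (∀ k ∉ S, f k = 0) ∧ ∑ k ∈ S, f k = 1 ∧ ∀ k, f k ≤ 1 / C}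

def extremeBoundedPMFs [DecidableEq β] : Set (β → ℝ) :=
  {f | ∃ A : Finset β, A ⊆ S ∧ (A.card : ℤ) = ⌊C⌋ ∧
    (((⌊C⌋ : ℝ) = C ∧ ∀ k, f k = if k ∈ A then 1 / C else 0) ∨
      (∃ x ∈ S, x ∉ A ∧ ∀ k, f k =
        (if k ∈ A then 1 / C else 0) + (if k = x then 1 - (⌊C⌋ : ℝ) / C else 0)))}

noncomputable def fractionalSupport (f : β → ℝ) : Finset β :=
  S.filter fun k => f k ≠ 0 ∧ f k ≠ 1 / C

variable {S C}

theorem convex_boundedPMFs : Convex ℝ (boundedPMFs S C) := by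
  rintro f ⟨hf0, hfS, hf1, hfC⟩ g ⟨hg0, hgS, hg1, hgC⟩ a b ha hb hab
  refine ⟨fun k => ?_, fun k hk => ?_, ?_, fun k => ?_⟩
  · exact add_nonneg (mul_nonneg ha (hf0 k)) (mul_nonneg hb (hg0 k))
  · simp [hfS k hk, hgS k hk]
  · simp only [Pi.add_apply, Pi.smul_apply, smul_eq_mul]
    rw [sum_add_distrib, ← mul_sum, ← mul_sum, hf1, hg1, mul_one, mul_one, hab]
  · calc a * f k + b * g k ≤ a * (1 / C) + b * (1 / C) := by gcongr <;> [exact hfC k; exact hgC k]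
      _ = 1 / C := by rw [← add_mul, hab, one_mul]

theorem extremeBoundedPMFs_subset [DecidableEq β] (hC : 0 < C) :
    extremeBoundedPMFs S C ⊆ boundedPMFs S C := by
  rintro f ⟨A, hAS, hA, hf⟩
  have hAC : (A.card : ℝ) = ⌊C⌋ := by exact_mod_cast hA
  have hfloor : (⌊C⌋ : ℝ) ≤ C := Int.floor_le C
  have hfloor' : C < ⌊C⌋ + 1 := Int.lt_floor_add_one C
  have hcap : 0 < 1 / C := by positivity
  rcases hf with ⟨hint, hf⟩ | ⟨x, hxS, hxA, hf⟩
  · refine ⟨fun k => ?_, fun k hk => ?_, ?_, fun k => ?_⟩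
    · rw [hf]; split_ifs <;> positivity
    · rw [hf, if_neg fun h => hk (hAS h)]
    · rw [sum_congr rfl fun k _ => hf k, sum_ite_mem, inter_eq_right.2 hAS, sum_const,
        nsmul_eq_mul, hAC, hint]
      field_simp
    · rw [hf]; split_ifs <;> linarith
  · have hrem0 : 0 ≤ 1 - (⌊C⌋ : ℝ) / C := by
      rw [sub_nonneg, div_le_one hC]; exact hfloor
    have hremC : 1 - (⌊C⌋ : ℝ) / C ≤ 1 / C := by
      rw [sub_le_iff_le_add, ← add_div, le_div_iff₀ hC]; linarith
    refine ⟨fun k => ?_, fun k hk => ?_, ?_, fun k => ?_⟩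
    · rw [hf]; split_ifs <;> positivity
    · rw [hf, if_neg fun h => hk (hAS h), if_neg fun h : k = x => hk (h ▸ hxS), add_zero]
    · rw [sum_congr rfl fun k _ => hf k, sum_add_distrib, sum_ite_mem, inter_eq_right.2 hAS,
        sum_const, nsmul_eq_mul, hAC, sum_ite_eq' S x, if_pos hxS]
      field_simp
      ring
    · rw [hf]
      by_cases hkx : k = x
      · subst hkx; simpa [hxA] using hremC
      · rw [if_neg hkx, add_zero]; split_ifs <;> linarith

theorem mem_extremeBoundedPMFs_of_card_fractionalSupport_le_one [DecidableEq β] (hC : 0 < C)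
    {f : β → ℝ} (hf : f ∈ boundedPMFs S C) (hfrac : (fractionalSupport S C f).card ≤ 1) :
    f ∈ extremeBoundedPMFs S C := by
  obtain ⟨hf0, hfS, hf1, hfC⟩ := hf
  set A := S.filter fun k => f k = 1 / C
  set F := fractionalSupport S C f
  have hAS : A ⊆ S := filter_subset _ S
  have hFS : F ⊆ S := filter_subset _ S
  have hdecomp : ∀ k, f k = (if k ∈ A then 1 / C else 0) + (if k ∈ F then f k else 0) := by
    intro k
    by_cases hk : k ∈ S
    · by_cases hkC : f k = 1 / C
      · simp [A, F, fractionalSupport, hk, hkC]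
      · by_cases hk0 : f k = 0 <;> simp [A, F, fractionalSupport, hk, hkC, hk0, -one_div]
    · simp [A, F, fractionalSupport, hk, hfS k hk]
  have hmass : (A.card : ℝ) / C + ∑ k ∈ F, f k = 1 := by
    calc _ = ∑ k ∈ S, ((if k ∈ A then 1 / C else 0) + (if k ∈ F then f k else 0)) := by
          rw [sum_add_distrib, sum_ite_mem, sum_ite_mem, inter_eq_right.2 hAS,
            inter_eq_right.2 hFS, sum_const, nsmul_eq_mul, mul_one_div]
      _ = 1 := (sum_congr rfl fun k _ => (hdecomp k).symm).trans hf1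
  rcases Nat.le_one_iff_eq_zero_or_eq_one.1 hfrac with hF | hF
  · rw [card_eq_zero] at hF
    rw [hF, sum_empty, add_zero, div_eq_one_iff_eq hC.ne'] at hmass
    have hA : (A.card : ℤ) = ⌊C⌋ := by rw [← hmass, Int.floor_natCast]
    refine ⟨A, hAS, hA, Or.inl ⟨by rw [← hA, ← hmass]; norm_cast, fun k => ?_⟩⟩
    simpa [hF] using hdecomp k
  · obtain ⟨x, hF⟩ := card_eq_one.1 hF
    obtain ⟨hxS, hx0, hxC⟩ := mem_filter.1 (hF ▸ mem_singleton_self x : x ∈ F)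
    have hfx : 0 < f x ∧ f x < 1 / C := ⟨(hf0 x).lt_of_ne' hx0, (hfC x).lt_of_ne hxC⟩
    rw [hF, sum_singleton] at hmass
    have hA : (A.card : ℤ) = ⌊C⌋ := by
      rw [eq_comm, Int.floor_eq_iff]
      rw [lt_div_iff₀ hC] at hfx
      constructor <;> push_cast <;> nlinarith [mul_div_cancel₀ (A.card : ℝ) hC.ne']
    have hxA : x ∉ A := fun h => hxC (mem_filter.1 h).2
    refine ⟨A, hAS, hA, Or.inr ⟨x, hxS, hxA, fun k => ?_⟩⟩
    rw [hdecomp k, hF, ← hA]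
    by_cases hkx : k = x
    · subst hkx
      simp only [hxA, if_false, mem_singleton_self, if_true, zero_add, Int.cast_natCast]
      linarith
    · simp [hkx]

theorem mem_boundedPMFs_add_smul_single_sub_single [DecidableEq β] {f : β → ℝ}
    (hf : f ∈ boundedPMFs S C) {j l : β} (hj : j ∈ S) (hl : l ∈ S) (hjl : j ≠ l) {t : ℝ}
    (hj0 : 0 ≤ f j + t) (hjC : f j + t ≤ 1 / C) (hl0 : 0 ≤ f l - t) (hlC : f l - t ≤ 1 / C) :
    f + t • (Pi.single j 1 - Pi.single l 1) ∈ boundedPMFs S C := by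
  obtain ⟨hf0, hfS, hf1, hfC⟩ := hf
  have hval : ∀ k, (f + t • (Pi.single j 1 - Pi.single l 1) : β → ℝ) k =
      if k = j then f j + t else if k = l then f l - t else f k := by
    intro k
    by_cases hkj : k = j
    · subst hkj; simp [hjl]
    · by_cases hkl : k = l
      · subst hkl; simp [hkj, sub_eq_add_neg]
      · simp [hkj, hkl]
  refine ⟨fun k => ?_, fun k hk => ?_, ?_, fun k => ?_⟩
  · rw [hval]; split_ifs <;> linarith [hf0 k]
  · rw [hval, if_neg fun h : k = j => hk (h ▸ hj), if_neg fun h : k = l => hk (h ▸ hl),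
      hfS k hk]
  · simp [sum_add_distrib, ← mul_sum, sum_pi_single', hj, hl, hf1]
  · rw [hval]; split_ifs <;> linarith [hfC k]

theorem card_fractionalSupport_lt {f g : β → ℝ} {j l w : β}
    (hj : j ∈ fractionalSupport S C f) (hl : l ∈ fractionalSupport S C f)
    (hfg : ∀ k, k ≠ j → k ≠ l → g k = f k) (hw : w = j ∨ w = l) (hgw : g w = 0 ∨ g w = 1 / C) :
    (fractionalSupport S C g).card < (fractionalSupport S C f).card := by
  have hsub : fractionalSupport S C g ⊆ fractionalSupport S C f := by
    intro k hk
    by_cases hkj : k = j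
    · exact hkj ▸ hj
    by_cases hkl : k = l
    · exact hkl ▸ hl
    simpa [fractionalSupport, hfg k hkj hkl] using hk
  have hwf : w ∈ fractionalSupport S C f := by rcases hw with rfl | rfl <;> assumption
  have hwg : w ∉ fractionalSupport S C g := fun h =>
    hgw.elim (mem_filter.1 h).2.1 (mem_filter.1 h).2.2
  exact card_lt_card ((ssubset_iff_of_subset hsub).2 ⟨w, hwf, hwg⟩)

theorem exists_mem_segment_card_fractionalSupport_lt [DecidableEq β] {f : β → ℝ}
    (hf : f ∈ boundedPMFs S C) {j l : β} (hj : j ∈ fractionalSupport S C f)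
    (hl : l ∈ fractionalSupport S C f) (hjl : j ≠ l) :
    ∃ g₁ ∈ boundedPMFs S C, ∃ g₂ ∈ boundedPMFs S C,
      (fractionalSupport S C g₁).card < (fractionalSupport S C f).card ∧
      (fractionalSupport S C g₂).card < (fractionalSupport S C f).card ∧ f ∈ segment ℝ g₁ g₂ := by
  obtain ⟨hjS, hj0, hjC⟩ := mem_filter.1 hj
  obtain ⟨hlS, hl0, hlC⟩ := mem_filter.1 hl
  have hfj : 0 < f j ∧ f j < 1 / C := ⟨(hf.1 j).lt_of_ne' hj0, (hf.2.2.2 j).lt_of_ne hjC⟩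
  have hfl : 0 < f l ∧ f l < 1 / C := ⟨(hf.1 l).lt_of_ne' hl0, (hf.2.2.2 l).lt_of_ne hlC⟩
  set d : β → ℝ := Pi.single j 1 - Pi.single l 1
  have hd : ∀ (t : ℝ) k, k ≠ j → k ≠ l → (f + t • d) k = f k := by
    intro t k hkj hkl; simp [d, hkj, hkl]
  have hdj : ∀ t : ℝ, (f + t • d) j = f j + t := by simp [d, hjl]
  have hdl : ∀ t : ℝ, (f + t • d) l = f l - t := by simp [d, hjl.symm, sub_eq_add_neg]
  set t₁ := min (1 / C - f j) (f l)
  set t₂ := min (f j) (1 / C - f l)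
  have ht₁ : 0 < t₁ := lt_min (by linarith) hfl.1
  have ht₂ : 0 < t₂ := lt_min hfj.1 (by linarith)
  refine ⟨f + t₁ • d, ?_, f + (-t₂) • d, ?_, ?_, ?_, ?_⟩
  · have := min_le_left (1 / C - f j) (f l)
    have := min_le_right (1 / C - f j) (f l)
    exact mem_boundedPMFs_add_smul_single_sub_single hf hjS hlS hjl (by linarith) (by linarith)
      (by linarith) (by linarith)
  · have := min_le_left (f j) (1 / C - f l)
    have := min_le_right (f j) (1 / C - f l)
    exact mem_boundedPMFs_add_smul_single_sub_single hf hjS hlS hjl (by linarith) (by linarith)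
      (by linarith) (by linarith)
  · obtain h | h : t₁ = 1 / C - f j ∨ t₁ = f l := min_choice _ _
    · exact card_fractionalSupport_lt hj hl (hd t₁) (.inl rfl) (.inr (by rw [hdj, h]; ring))
    · exact card_fractionalSupport_lt hj hl (hd t₁) (.inr rfl) (.inl (by rw [hdl, h]; ring))
  · obtain h | h : t₂ = f j ∨ t₂ = 1 / C - f l := min_choice _ _
    · exact card_fractionalSupport_lt hj hl (hd _) (.inl rfl) (.inl (by rw [hdj, h]; ring))
    · exact card_fractionalSupport_lt hj hl (hd _) (.inr rfl) (.inr (by rw [hdl, h]; ring))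
  · -- `f` divides the segment in the ratio `t₁ : t₂`.
    refine ⟨t₂ / (t₁ + t₂), t₁ / (t₁ + t₂), by positivity, by positivity, by field_simp; ring,
      ?_⟩
    match_scalars <;> field_simp <;> ring

theorem boundedPMFs_subset_convexHull [DecidableEq β] (hC : 0 < C) :
    boundedPMFs S C ⊆ convexHull ℝ (extremeBoundedPMFs S C) := by
  intro f hf
  by_cases htwo : ∃ j ∈ fractionalSupport S C f, ∃ l ∈ fractionalSupport S C f, j ≠ l
  · obtain ⟨j, hj, l, hl, hjl⟩ := htwo
    obtain ⟨g₁, hg₁, g₂, hg₂, -, -, hseg⟩ :=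
      exists_mem_segment_card_fractionalSupport_lt hf hj hl hjl
    exact (convex_convexHull ℝ _).segment_subset (boundedPMFs_subset_convexHull hC hg₁)
      (boundedPMFs_subset_convexHull hC hg₂) hseg
  · exact subset_convexHull ℝ _ (mem_extremeBoundedPMFs_of_card_fractionalSupport_le_one hC hf
      (card_le_one.2 fun j hj l hl => by_contra fun hjl => htwo ⟨j, hj, l, hl, hjl⟩))
termination_by f => (fractionalSupport S C f).card

end Polytope

theorem ConvexOn.sum {𝕜 E β ι : Type*} [Semiring 𝕜] [PartialOrder 𝕜] [AddCommMonoid E]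
    [AddCommMonoid β] [PartialOrder β] [IsOrderedAddMonoid β] [SMul 𝕜 E] [Module 𝕜 β]
    {s : Set E} (hs : Convex 𝕜 s) (t : Finset ι) {f : ι → E → β}
    (hf : ∀ i ∈ t, ConvexOn 𝕜 s (f i)) : ConvexOn 𝕜 s fun x => ∑ i ∈ t, f i x := by
  classical
  induction t using Finset.induction_on with
  | empty => simpa using convexOn_const (0 : β) hs
  | insert a t ha ih =>
    simp only [sum_insert ha]
    exact (hf a (mem_insert_self a t)).add (ih fun i hi => hf i (mem_insert_of_mem hi))

theorem exists_ge_of_convexOn_update {ι V : Type*} [Fintype ι] [DecidableEq ι]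
    [AddCommGroup V] [Module ℝ V] {K E : ι → Set V} (hEK : ∀ i, E i ⊆ K i)
    (hK : ∀ i, K i ⊆ convexHull ℝ (E i))
    {Φ : (ι → V) → ℝ} (hΦ : ∀ q, (∀ i, q i ∈ K i) → ∀ i, ConvexOn ℝ (K i) (Φ ∘ update q i))
    {p : ι → V} (hp : ∀ i, p i ∈ K i) : ∃ e, (∀ i, e i ∈ E i) ∧ Φ p ≤ Φ e := by
  suffices ∀ t : Finset ι, ∃ e, (∀ i, e i ∈ K i) ∧ (∀ i ∈ t, e i ∈ E i) ∧ Φ p ≤ Φ e by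
    obtain ⟨e, -, he, hpe⟩ := this univ
    exact ⟨e, fun i => he i (mem_univ i), hpe⟩
  intro t
  induction t using Finset.induction_on with
  | empty => exact ⟨p, hp, by simp, le_rfl⟩
  | insert a t ha ih =>
    obtain ⟨e, heK, heE, hpe⟩ := ih
    obtain ⟨r, hrE, hr⟩ := (hΦ e heK a).exists_ge_of_mem_convexHull (hEK a) (hK a (heK a))
    refine ⟨update e a r, fun i => ?_, fun i hi => ?_, hpe.trans (by simpa using hr)⟩
    · rcases eq_or_ne i a with rfl | hia
      · simpa using hEK i hrE
      · simpa [hia] using heK i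
    · rcases eq_or_ne i a with rfl | hia
      · simpa using hrE
      · simpa [hia] using heE i ((mem_insert.1 hi).resolve_left hia)

section Convolution

variable {ι : Type*} [Fintype ι] [DecidableEq ι] (S : Finset ℤ)

def sumFiber (s : ℤ) : Finset (ι → ℤ) :=
  (Fintype.piFinset fun _ => S).filter fun k => ∑ i, k i = s

def sumRange : Finset ℤ :=
  (Fintype.piFinset fun _ : ι => S).image fun k => ∑ i, k i

-- Bundled as a multilinear map in the marginals: linearity in each of them is what makes
-- `renyiPowerSum` convex in each of them.
noncomputable def convolutionMass (s : ℤ) : MultilinearMap ℝ (fun _ : ι => ℤ → ℝ) ℝ :=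
  ∑ k ∈ sumFiber S s,
    (MultilinearMap.mkPiAlgebra ℝ ι ℝ).compLinearMap fun i => LinearMap.proj (k i)

noncomputable def renyiPowerSum (α : ℝ) (q : ι → ℤ → ℝ) : ℝ :=
  ∑ s ∈ sumRange (ι := ι) S, convolutionMass S s q ^ α

variable {S}

theorem convolutionMass_apply (s : ℤ) (q : ι → ℤ → ℝ) :
    convolutionMass S s q = ∑ k ∈ sumFiber S s, ∏ i, q i (k i) := by
  simp [convolutionMass]

theorem convolutionMass_eq_zero {s : ℤ} (hs : s ∉ sumRange (ι := ι) S) (q : ι → ℤ → ℝ) :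
    convolutionMass S s q = 0 := by
  rw [convolutionMass_apply, sum_eq_zero]
  intro k hk
  obtain ⟨hkS, rfl⟩ := mem_filter.1 hk
  exact (hs (mem_image_of_mem _ hkS)).elim

theorem convolutionMass_nonneg {q : ι → ℤ → ℝ} (hq : ∀ i k, 0 ≤ q i k) (s : ℤ) :
    0 ≤ convolutionMass S s q := by
  rw [convolutionMass_apply]
  exact sum_nonneg fun k _ => prod_nonneg fun i _ => hq i (k i)

theorem sum_convolutionMass (q : ι → ℤ → ℝ) :
    ∑ s ∈ sumRange (ι := ι) S, convolutionMass S s q = ∏ i, ∑ k ∈ S, q i k := by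
  simp only [convolutionMass_apply, prod_univ_sum]
  exact sum_fiberwise_of_maps_to (g := fun k : ι → ℤ => ∑ i, k i)
    (fun k hk => mem_image_of_mem _ hk) _

theorem renyiPowerSum_pos {q : ι → ℤ → ℝ} (hq0 : ∀ i k, 0 ≤ q i k)
    (hq1 : ∀ i, ∑ k ∈ S, q i k = 1) (α : ℝ) : 0 < renyiPowerSum S α q := by
  have hsum : ∑ s ∈ sumRange (ι := ι) S, (0 : ℝ) <
      ∑ s ∈ sumRange (ι := ι) S, convolutionMass S s q := by
    simp [sum_convolutionMass, hq1]
  obtain ⟨s, hs, hpos⟩ := exists_lt_of_sum_lt hsum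
  exact sum_pos' (fun s _ => rpow_nonneg (convolutionMass_nonneg hq0 s) α)
    ⟨s, hs, rpow_pos_of_pos hpos α⟩

theorem convexOn_renyiPowerSum_update {α : ℝ} (hα : 1 ≤ α) {q : ι → ℤ → ℝ}
    (hq : ∀ i k, 0 ≤ q i k) (i : ι) :
    ConvexOn ℝ (Set.Ici 0) (renyiPowerSum S α ∘ update q i) := by
  refine ConvexOn.sum (convex_Ici 0) _ fun s _ => ?_
  refine ((convexOn_rpow hα).comp_linearMap ((convolutionMass S s).toLinearMap q i)).subset
    (fun r hr => ?_) (convex_Ici 0)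
  refine convolutionMass_nonneg (fun j k => ?_) s
  rcases eq_or_ne j i with rfl | hji
  · simpa using hr k
  · simpa [hji] using hq j k

end Convolution

theorem exists_extremeBoundedPMFs_renyiPowerSum_ge {ι : Type*} [Fintype ι] [DecidableEq ι]
    {S : Finset ℤ} {α : ℝ} (hα : 1 ≤ α) {C : ι → ℝ} (hC : ∀ i, 0 < C i) {p : ι → ℤ → ℝ}
    (hp : ∀ i, p i ∈ boundedPMFs S (C i)) :
    ∃ e, (∀ i, e i ∈ extremeBoundedPMFs S (C i)) ∧ renyiPowerSum S α p ≤ renyiPowerSum S α e :=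
  exists_ge_of_convexOn_update (fun i => extremeBoundedPMFs_subset (hC i))
    (fun i => boundedPMFs_subset_convexHull (hC i))
    (fun _ hq i => (convexOn_renyiPowerSum_update hα (fun j => (hq j).1) i).subset
      (fun _ hr => hr.1) convex_boundedPMFs) hp

noncomputable def PMF.ofMemBoundedPMFs {β : Type*} {S : Finset β} {C : ℝ} {f : β → ℝ}
    (hf : f ∈ boundedPMFs S C) : PMF β :=
  PMF.ofFinset (fun k => ENNReal.ofReal (f k)) S
    (by rw [← ENNReal.ofReal_sum_of_nonneg fun k _ => hf.1 k, hf.2.2.1, ENNReal.ofReal_one])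
    fun k hk => by rw [hf.2.1 k hk, ENNReal.ofReal_zero]

section ProductMeasure

variable {ι : Type*} [Fintype ι] {S : Finset ℤ} {e : ι → ℤ → ℝ} {C : ι → ℝ}
  (he : ∀ i, e i ∈ boundedPMFs S (C i))

theorem measureReal_pi_ofMemBoundedPMFs_eval (i : ι) (k : ℤ) :
    (Measure.pi fun i => (PMF.ofMemBoundedPMFs (he i)).toMeasure).real {z | z i = k} = e i k := by
  show (Measure.pi _).real ((Function.eval i : (ι → ℤ) → ℤ) ⁻¹' {k}) = e i k
  rw [(measurePreserving_eval _ i).measureReal_preimage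
      (measurableSet_singleton k).nullMeasurableSet,
    measureReal_def, PMF.toMeasure_apply_singleton _ _ (measurableSet_singleton k),
    PMF.ofMemBoundedPMFs, PMF.ofFinset_apply, ENNReal.toReal_ofReal ((he i).1 k)]

theorem ae_pi_ofMemBoundedPMFs_mem (i : ι) :
    ∀ᵐ z ∂(Measure.pi fun i => (PMF.ofMemBoundedPMFs (he i)).toMeasure), z i ∈ S := by
  rw [ae_iff]
  refine Measure.pi_eval_preimage_null (fun i => (PMF.ofMemBoundedPMFs (he i)).toMeasure)
    ((PMF.toMeasure_apply_eq_zero_iff _ (.of_discrete (s := (S : Set ℤ)ᶜ))).2 ?_)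
  rw [PMF.ofMemBoundedPMFs, PMF.support_ofFinset]
  exact disjoint_compl_right.mono_left Set.inter_subset_left

end ProductMeasure

section Probability

variable {ι Ω : Type*} [Fintype ι] [DecidableEq ι] [MeasurableSpace Ω] {μ : Measure Ω}
  {S : Finset ℤ}

theorem measureReal_sum_eq_convolutionMass [IsFiniteMeasure μ] {X : ι → Ω → ℤ}
    (hXm : ∀ i, Measurable (X i)) (hX : iIndepFun X μ) (hS : ∀ i, ∀ᵐ ω ∂μ, X i ω ∈ S) (s : ℤ) :
    μ.real {ω | ∑ i, X i ω = s} = convolutionMass S s fun i k => μ.real {ω | X i ω = k} := by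
  have hae : {ω | ∑ i, X i ω = s} =ᵐ[μ]
      (fun ω i => X i ω) ⁻¹' (sumFiber (ι := ι) S s : Set (ι → ℤ)) := by
    filter_upwards [ae_all_iff.2 hS] with ω hω
    show (∑ i, X i ω = s) = ((fun i => X i ω) ∈ sumFiber (ι := ι) S s)
    simp [sumFiber, hω]
  rw [measureReal_congr hae, ← sum_measureReal_preimage_singleton _
    fun k _ => measurable_pi_lambda _ hXm (measurableSet_singleton k), convolutionMass_apply]
  refine sum_congr rfl fun k _ => ?_
  have hk : (fun ω i => X i ω) ⁻¹' {k} = ⋂ i ∈ univ, X i ⁻¹' {k i} := by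
    ext; simp [funext_iff]
  rw [hk, measureReal_def, hX.measure_inter_preimage_eq_mul _
    fun i _ => measurableSet_singleton _, ENNReal.toReal_prod]
  rfl

theorem measureReal_mem_boundedPMFs [IsProbabilityMeasure μ] {Y : Ω → ℤ} (hY : Measurable Y)
    (hS : ∀ᵐ ω ∂μ, Y ω ∈ S) {C : ℝ} (hC : ∀ k, μ.real {ω | Y ω = k} ≤ 1 / C) :
    (fun k => μ.real {ω | Y ω = k}) ∈ boundedPMFs S C := by
  refine ⟨fun k => measureReal_nonneg, fun k hk => ?_, ?_, hC⟩
  · rw [measureReal_eq_zero_iff]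
    exact measure_mono_null (fun ω (h : Y ω = k) => show Y ω ∉ S from h ▸ hk)
      (ae_iff.1 hS)
  · show ∑ k ∈ S, μ.real (Y ⁻¹' {k}) = 1
    rw [sum_measureReal_preimage_singleton S fun k _ => hY (measurableSet_singleton k),
      measureReal_congr (ae_eq_univ.2 hS : Y ⁻¹' S =ᵐ[μ] Set.univ), probReal_univ]

theorem renyiEntropyM_sum_eq [IsFiniteMeasure μ] {α : ℝ} (hα : α ≠ 0) {X : ι → Ω → ℤ}
    (hXm : ∀ i, Measurable (X i)) (hX : iIndepFun X μ) (hS : ∀ i, ∀ᵐ ω ∂μ, X i ω ∈ S) :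
    renyiEntropyM μ α (fun ω => ∑ i, X i ω) =
      (1 - α)⁻¹ * log (renyiPowerSum S α fun i k => μ.real {ω | X i ω = k}) := by
  simp_rw [renyiEntropyM, ← measureReal_def, measureReal_sum_eq_convolutionMass hXm hX hS]
  rw [tsum_eq_sum fun s hs => by rw [convolutionMass_eq_zero hs, zero_rpow hα], renyiPowerSum]

end Probability

theorem renyiEntropy_extreme_point_reduction_general
    {Ω : Type*} [MeasureSpace Ω] [IsProbabilityMeasure (ℙ : Measure Ω)]
    (m n : ℕ) (α : ℝ) (hα : 1 < α)
    (C : Fin n → ℝ) (hC1 : ∀ i, 1 < C i)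
    (X : Fin n → Ω → ℤ) (hXm : ∀ i, Measurable (X i))
    (hXrange : ∀ i ω, X i ω ∈ Finset.Icc (0:ℤ) m)
    (hindep : iIndepFun X ℙ)
    (hbound : ∀ i, ∀ k : ℤ, (ℙ {ω | X i ω = k}).toReal ≤ 1 / C i) :
    ∃ μ : Measure (Fin n → ℤ), IsProbabilityMeasure μ ∧
      iIndepFun (fun i (z : Fin n → ℤ) => z i) μ ∧
      (∀ i, ∃ A : Finset ℤ, A ⊆ Finset.Icc (0:ℤ) m ∧ (A.card : ℤ) = ⌊C i⌋ ∧
        (((⌊C i⌋ : ℝ) = C i ∧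
            ∀ k : ℤ, (μ {z | z i = k}).toReal = if k ∈ A then 1 / C i else 0) ∨
          (∃ x ∈ Finset.Icc (0:ℤ) m, x ∉ A ∧
            ∀ k : ℤ, (μ {z | z i = k}).toReal =
              (if k ∈ A then 1 / C i else 0) +
                (if k = x then 1 - (⌊C i⌋ : ℝ) / C i else 0)))) ∧
      renyiEntropyM ℙ α (fun ω => ∑ i, X i ω) ≥
        renyiEntropyM μ α (fun z => ∑ i, z i) := by
  have hC : ∀ i, 0 < C i := fun i => one_pos.trans (hC1 i)
  have hXS : ∀ i, ∀ᵐ ω ∂ℙ, X i ω ∈ Finset.Icc (0:ℤ) m := fun i => .of_forall (hXrange i)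
  have hp : ∀ i, (fun k => (ℙ : Measure Ω).real {ω | X i ω = k}) ∈ boundedPMFs _ (C i) :=
    fun i => measureReal_mem_boundedPMFs (hXm i) (hXS i) (hbound i)
  obtain ⟨e, heExt, hGe⟩ := exists_extremeBoundedPMFs_renyiPowerSum_ge hα.le hC hp
  have he : ∀ i, e i ∈ boundedPMFs _ (C i) := fun i => extremeBoundedPMFs_subset (hC i) (heExt i)
  set μ := Measure.pi fun i => (PMF.ofMemBoundedPMFs (he i)).toMeasure
  have hμe : ∀ i k, μ.real {z | z i = k} = e i k := measureReal_pi_ofMemBoundedPMFs_eval he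
  have hZindep : iIndepFun (fun i (z : Fin n → ℤ) => z i) μ :=
    iIndepFun_pi fun _ => measurable_id.aemeasurable
  refine ⟨μ, inferInstance, hZindep, fun i => ?_, ?_⟩
  · simp only [← measureReal_def, hμe]
    exact heExt i
  · rw [ge_iff_le, renyiEntropyM_sum_eq (by positivity) (fun i => measurable_pi_apply i)
      hZindep (ae_pi_ofMemBoundedPMFs_mem he),
      renyiEntropyM_sum_eq (by positivity) hXm hindep hXS, funext₂ hμe]
    exact mul_le_mul_of_nonpos_left
      (log_le_log (renyiPowerSum_pos (fun i => (hp i).1) (fun i => (hp i).2.2.1) α) hGe)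
      (inv_nonpos.2 (by linarith))

/-- **reduction to extreme points.**
Let `α ∈ (1,∞)`, `1 < C_i ≤ m+1`, and let `X_1, …, X_n` be mutually independent
random variables with values in `{0,…,m}` such that `P(X_i = k) ≤ 1/C_i` for all `k`.
Then there exist mutually independent random variables `Z_1, …, Z_n` with values in
`{0,…,m}` (realized here as the coordinates of some probability measure on
`Fin n → ℤ`) whose probability mass functions are extreme points
`f_{Z_i} = (1/C_i)·1_A + (1 − ⌊C_i⌋/C_i)·1_{{x}}` (with `|A| = ⌊C_i⌋`,
`x ∈ {0,…,m} \ A`, the second term vanishing when `C_i` is an integer), and such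
that `H_α(X_1 + ⋯ + X_n) ≥ H_α(Z_1 + ⋯ + Z_n)`. -/
theorem renyiEntropy_extreme_point_reduction
    {Ω : Type*} [MeasureSpace Ω] [IsProbabilityMeasure (ℙ : Measure Ω)]
    (m n : ℕ) (α : ℝ) (hα : 1 < α)
    (C : Fin n → ℝ) (hC1 : ∀ i, 1 < C i) (hC2 : ∀ i, C i ≤ m + 1)
    (X : Fin n → Ω → ℤ) (hXm : ∀ i, Measurable (X i))
    (hXrange : ∀ i ω, X i ω ∈ Finset.Icc (0:ℤ) m)
    (hindep : iIndepFun X ℙ)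
    (hbound : ∀ i, ∀ k : ℤ, (ℙ {ω | X i ω = k}).toReal ≤ 1 / C i) :
    ∃ μ : Measure (Fin n → ℤ), IsProbabilityMeasure μ ∧
      iIndepFun (fun i (z : Fin n → ℤ) => z i) μ ∧
      (∀ i, ∃ A : Finset ℤ, A ⊆ Finset.Icc (0:ℤ) m ∧ (A.card : ℤ) = ⌊C i⌋ ∧
        (((⌊C i⌋ : ℝ) = C i ∧
            ∀ k : ℤ, (μ {z | z i = k}).toReal = if k ∈ A then 1 / C i else 0) ∨
          (∃ x ∈ Finset.Icc (0:ℤ) m, x ∉ A ∧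
            ∀ k : ℤ, (μ {z | z i = k}).toReal =
              (if k ∈ A then 1 / C i else 0) +
                (if k = x then 1 - (⌊C i⌋ : ℝ) / C i else 0)))) ∧
      renyiEntropyM ℙ α (fun ω => ∑ i, X i ω) ≥
        renyiEntropyM μ α (fun z => ∑ i, z i) :=
  renyiEntropy_extreme_point_reduction_general m n α hα C hC1 X hXm hXrange hindep hbound
end

section
/- Let X be an integer-valued random variable that is symmetric (there exists a ∈ ℝ, necessarily in (1/2)ℤ, with P(X = a + x) = P(X = a − x) for all x ∈ ℝ) and log-concave. Then Δ_∞(X) ≥ 2·Var(X). -/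
/-!
Fold the mass function `p` of `X` at `c = ⌈a⌉`, `a ∈ ½ℤ` its centre of symmetry: the sequence
`u j = p (c + j)` is log-concave with support an initial segment, nonincreasing, and
`u 0 = M = sup p`. Such a sequence crosses the geometric sequence `M q ^ j` of the same total
mass at most once, and from above, so its tails are dominated by the geometric tails. By Abel
summation its second moment is then at most the geometric one, which is explicit; with
`q = (1 - M) / (1 + M)` for an integer centre and `q = 1 - 2M` for a half-integer centre this
gives `2 Var X ≤ M⁻² - 1`.
-/

open MeasureTheory ProbabilityTheory Real

/-- `Δ_∞(X) = (sup_{n∈ℤ} P(X=n))⁻² − 1` for an integer-valued random variable. -/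
noncomputable def DeltaInf {Ω : Type*} [MeasureSpace Ω] (X : Ω → ℤ) : ℝ :=
  ((⨆ n : ℤ, (ℙ {ω | X ω = n}).toReal) ^ 2)⁻¹ - 1

open Finset

theorem summable_and_tsum_mul_le_of_tail_le {u w B : ℕ → ℝ} {S : ℝ} (hu : ∀ j, 0 ≤ u j)
    (hsum : Summable u) (hw0 : w 0 = 0) (hw : Monotone w)
    (hB : ∀ j, ∑' i, u (i + (j + 1)) ≤ B j)
    (hS : HasSum (fun i => (w (i + 1) - w i) * B i) S) :
    Summable (fun j => w j * u j) ∧ ∑' j, w j * u j ≤ S := by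
  have hd : ∀ i, 0 ≤ w (i + 1) - w i := fun i => sub_nonneg.2 (hw (Nat.le_succ i))
  have hwu : ∀ j, 0 ≤ w j * u j := fun j => mul_nonneg (hw0 ▸ hw (Nat.zero_le j)) (hu j)
  have hpartial : ∀ N, ∑ j ∈ range N, w j * u j ≤ S := fun N =>
    calc ∑ j ∈ range N, w j * u j
        = ∑ j ∈ range N, ∑ i ∈ range j, (w (i + 1) - w i) * u j := by
          simp_rw [← sum_mul, sum_range_sub w, hw0, sub_zero]
      _ = ∑ i ∈ range N, (w (i + 1) - w i) * ∑ j ∈ Ico (i + 1) N, u j := by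
          simp_rw [mul_sum]
          exact sum_comm' fun j i => by simp only [mem_range, mem_Ico]; omega
      _ ≤ ∑ i ∈ range N, (w (i + 1) - w i) * B i := by
          refine sum_le_sum fun i _ => mul_le_mul_of_nonneg_left ?_ (hd i)
          rw [sum_Ico_eq_sum_range]
          calc ∑ k ∈ range (N - (i + 1)), u (i + 1 + k)
              ≤ ∑' k, u (k + (i + 1)) := by
                simp_rw [add_comm (i + 1)]
                exact ((summable_nat_add_iff _).2 hsum).sum_le_tsum _ fun k _ => hu _
            _ ≤ B i := hB i
      _ ≤ S := sum_le_hasSum _ (fun i _ => mul_nonneg (hd i)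
            ((tsum_nonneg fun k => hu _).trans (hB i))) hS
  exact ⟨summable_of_sum_range_le hwu hpartial, Real.tsum_le_of_sum_range_le hwu hpartial⟩

structure IsLogConcaveNat (u : ℕ → ℝ) : Prop where
  nonneg : ∀ j, 0 ≤ u j
  mul_le_sq : ∀ j, u j * u (j + 2) ≤ u (j + 1) ^ 2
  eq_zero_succ : ∀ j, u j = 0 → u (j + 1) = 0

namespace IsLogConcaveNat

variable {u : ℕ → ℝ}

theorem succ_le_mul_of_le (hu : IsLogConcaveNat u) {k : ℕ} {r : ℝ} (hk : u (k + 1) ≤ r * u k)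
    {i : ℕ} (hki : k ≤ i) : u (i + 1) ≤ r * u i := by
  induction i, hki using Nat.le_induction with
  | base => exact hk
  | succ i _ ih =>
    rcases (hu.nonneg (i + 1)).eq_or_lt with h0 | hpos
    · rw [hu.eq_zero_succ _ h0.symm, ← h0, mul_zero]
    · have hi : 0 < u i := by
        by_contra! h
        rw [le_antisymm h (hu.nonneg i), mul_zero] at ih
        linarith
      have := hu.mul_le_sq i
      nlinarith

theorem le_mul_pow (hu : IsLogConcaveNat u) {k : ℕ} {r : ℝ} (hr : 0 ≤ r)
    (hk : u (k + 1) ≤ r * u k) (i : ℕ) : u (k + i) ≤ u k * r ^ i := by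
  induction i with
  | zero => simp
  | succ i ih =>
    calc u (k + (i + 1)) ≤ r * u (k + i) := hu.succ_le_mul_of_le hk (Nat.le_add_right k i)
      _ ≤ r * (u k * r ^ i) := by gcongr
      _ = u k * r ^ (i + 1) := by ring

theorem antitone (hu : IsLogConcaveNat u) (h : u 1 ≤ u 0) : Antitone u :=
  antitone_nat_of_succ_le fun i => by
    simpa using hu.succ_le_mul_of_le (r := 1) (by simpa using h) (Nat.zero_le i)

theorem le_geometric_of_lt (hu : IsLogConcaveNat u) {q : ℝ} (hq : 0 ≤ q) {i : ℕ}
    (hi : u i < u 0 * q ^ i) {l : ℕ} (hil : i ≤ l) : u l ≤ u 0 * q ^ l := by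
  induction i generalizing l with
  | zero => simp at hi
  | succ i ih =>
    by_cases hprev : u i < u 0 * q ^ i
    · exact ih hprev (by omega)
    · have hstep : u (i + 1) ≤ q * u i := by
        rw [pow_succ] at hi
        nlinarith
      obtain ⟨n, rfl⟩ := Nat.exists_eq_add_of_le hil
      calc u (i + 1 + n) ≤ u (i + 1) * q ^ n :=
            hu.le_mul_pow hq (hu.succ_le_mul_of_le hstep (Nat.le_succ i)) n
        _ ≤ u 0 * q ^ (i + 1) * q ^ n := by gcongr
        _ = u 0 * q ^ (i + 1 + n) := by ring

theorem tsum_nat_add_le (hu : IsLogConcaveNat u) (hsum : Summable u) {q : ℝ} (hq0 : 0 ≤ q)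
    (hq1 : q < 1) (htot : ∑' j, u j = u 0 / (1 - q)) (j : ℕ) :
    ∑' i, u (i + j) ≤ u 0 * q ^ j / (1 - q) := by
  by_cases h : ∃ i < j, u i < u 0 * q ^ i
  · obtain ⟨i, hij, hi⟩ := h
    have hgeo : HasSum (fun k => u 0 * q ^ (k + j)) (u 0 * q ^ j / (1 - q)) := by
      rw [div_eq_mul_inv]
      exact ((hasSum_geometric_of_lt_one hq0 hq1).mul_left (u 0 * q ^ j)).congr_fun
        fun k => by ring
    exact hasSum_le (fun k => hu.le_geometric_of_lt hq0 hi (by omega))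
      ((summable_nat_add_iff j).2 hsum).hasSum hgeo
  · push Not at h
    have hhead : ∑ i ∈ range j, u 0 * q ^ i ≤ ∑ i ∈ range j, u i :=
      sum_le_sum fun i hi => h i (mem_range.1 hi)
    have hgeo : ∑ i ∈ range j, u 0 * q ^ i = u 0 / (1 - q) - u 0 * q ^ j / (1 - q) := by
      have : 1 - q ≠ 0 := by linarith
      have : q - 1 ≠ 0 := by linarith
      rw [← mul_sum, geom_sum_eq hq1.ne]
      field_simp
      ring
    linarith [hsum.sum_add_tsum_nat_add j]

theorem summable_and_tsum_mul_le (hu : IsLogConcaveNat u) (hsum : Summable u) {q : ℝ}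
    (hq0 : 0 ≤ q) (hq1 : q < 1) (htot : ∑' j, u j = u 0 / (1 - q)) {c : ℝ} (hc : -1 ≤ c) :
    Summable (fun j : ℕ => j * (j + c) * u j) ∧
      ∑' j : ℕ, j * (j + c) * u j ≤ u 0 * q * (2 * q + (1 + c) * (1 - q)) / (1 - q) ^ 3 := by
  have h1q : 1 - q ≠ 0 := by linarith
  have hq : ‖q‖ < 1 := by rwa [Real.norm_of_nonneg hq0]
  refine summable_and_tsum_mul_le_of_tail_le hu.nonneg hsum (w := fun j : ℕ => j * (j + c))
    (B := fun i => u 0 * q ^ (i + 1) / (1 - q)) (by simp)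
    (monotone_nat_of_le_succ fun j => by push_cast; nlinarith [j.cast_nonneg (α := ℝ)])
    (fun j => hu.tsum_nat_add_le hsum hq0 hq1 htot (j + 1)) ?_
  have hS := (((hasSum_coe_mul_geometric_of_norm_lt_one hq).mul_left 2).add
    ((hasSum_geometric_of_lt_one hq0 hq1).mul_left (1 + c))).mul_left (u 0 * q / (1 - q))
  rw [show u 0 * q / (1 - q) * (2 * (q / (1 - q) ^ 2) + (1 + c) * (1 - q)⁻¹) =
    u 0 * q * (2 * q + (1 + c) * (1 - q)) / (1 - q) ^ 3 by field_simp] at hS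
  exact hS.congr_fun fun i => by push_cast; ring

end IsLogConcaveNat

theorem hasSum_int_of_sub_eq_even {α : Type*} [AddCommGroup α] [TopologicalSpace α]
    [IsTopologicalAddGroup α] {f : ℤ → α} {c : ℤ} {a : α} (hf : ∀ n, f (2 * c - n) = f n)
    (ha : HasSum (fun j : ℕ => f (c + j)) a) : HasSum f (a + a - f c) := by
  have hneg : HasSum (fun j : ℕ => f (c + -(j + 1 : ℤ))) (a - f c) := by
    have ha1 := (hasSum_nat_add_iff' 1).2 ha
    rw [sum_range_one, Nat.cast_zero, add_zero] at ha1
    refine ha1.congr_fun fun j => ?_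
    rw [← hf]
    congr 1
    push_cast
    ring
  rw [add_sub_assoc, ← (Equiv.addLeft c).hasSum_iff]
  exact HasSum.of_nat_of_neg_add_one (f := fun n => f (c + n)) ha hneg

theorem hasSum_int_of_sub_eq_odd {α : Type*} [AddCommMonoid α] [TopologicalSpace α]
    [ContinuousAdd α] {f : ℤ → α} {c : ℤ} {a : α} (hf : ∀ n, f (2 * c - 1 - n) = f n)
    (ha : HasSum (fun j : ℕ => f (c + j)) a) : HasSum f (a + a) := by
  have hneg : HasSum (fun j : ℕ => f (c + -(j + 1 : ℤ))) a := by
    refine ha.congr_fun fun j => ?_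
    rw [← hf]
    congr 1
    ring
  rw [← (Equiv.addLeft c).hasSum_iff]
  exact HasSum.of_nat_of_neg_add_one (f := fun n => f (c + n)) ha hneg

theorem exists_ne_zero_of_hasSum {ι α : Type*} [AddCommMonoid α] [TopologicalSpace α]
    [T2Space α] {f : ι → α} {a : α} (hf : HasSum f a) (ha : a ≠ 0) : ∃ i, f i ≠ 0 := by
  by_contra! h
  exact ha (hf.unique (hasSum_zero.congr_fun h))

theorem Summable.comp_int_add_natCast {f : ℤ → ℝ} (hf : Summable f) (c : ℤ) :
    Summable (fun j : ℕ => f (c + j)) :=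
  hf.comp_injective ((add_right_injective c).comp Nat.cast_injective)

structure IsLogConcaveInt (p : ℤ → ℝ) : Prop where
  nonneg : ∀ n, 0 ≤ p n
  mul_le_sq : ∀ n, p (n - 1) * p (n + 1) ≤ p n ^ 2
  pos_of_le_of_le : ∀ i j k, i ≤ k → k ≤ j → 0 < p i → 0 < p j → 0 < p k

namespace IsLogConcaveInt

variable {p : ℤ → ℝ} {e c : ℤ}

theorem pos_center (hp : IsLogConcaveInt p) (hsymm : ∀ n, p (e - n) = p n) (hc : e ≤ 2 * c)
    (hc' : 2 * c ≤ e + 1) {n : ℤ} (hn : 0 < p n) : 0 < p c := by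
  have hn' : 0 < p (e - n) := (hsymm n).symm ▸ hn
  rcases le_total n (e - n) with h | h
  · exact hp.pos_of_le_of_le n (e - n) c (by omega) (by omega) hn hn'
  · exact hp.pos_of_le_of_le (e - n) n c (by omega) (by omega) hn' hn

theorem isLogConcaveNat_shift (hp : IsLogConcaveInt p) (hsymm : ∀ n, p (e - n) = p n)
    (hc : e ≤ 2 * c) : IsLogConcaveNat (fun j : ℕ => p (c + j)) where
  nonneg j := hp.nonneg _
  mul_le_sq j := by
    have h := hp.mul_le_sq (c + j + 1)
    push_cast
    rwa [add_sub_cancel_right, show c + j + 1 + 1 = c + (j + 2) by ring,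
      show c + j + 1 = c + (j + 1) by ring] at h
  eq_zero_succ j h0 := by
    by_contra hne
    have hpos : 0 < p (c + (j + 1 : ℕ)) := lt_of_le_of_ne (hp.nonneg _) (Ne.symm hne)
    have hpos' : 0 < p (e - (c + (j + 1 : ℕ))) := (hsymm _).symm ▸ hpos
    have := hp.pos_of_le_of_le _ _ (c + j) (by omega) (by omega) hpos' hpos
    exact this.ne' h0

theorem le_center (hp : IsLogConcaveInt p) (hsymm : ∀ n, p (e - n) = p n) (hc : e ≤ 2 * c)
    (hc' : 2 * c ≤ e + 1) (hpc : 0 < p c) (n : ℤ) : p n ≤ p c := by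
  have hanti : Antitone (fun j : ℕ => p (c + j)) := by
    refine (hp.isLogConcaveNat_shift hsymm hc).antitone ?_
    have hlc := hp.mul_le_sq c
    have hprev : p (c - 1) = p (c + 1) ∨ p (c - 1) = p c := by
      rw [← hsymm (c - 1)]
      rcases (show e = 2 * c ∨ e = 2 * c - 1 by omega) with rfl | rfl
      · left; ring_nf
      · right; ring_nf
    simp only [Nat.cast_one, Nat.cast_zero, add_zero]
    by_contra! h
    rcases hprev with h' | h' <;> rw [h'] at hlc <;> nlinarith [hp.nonneg c]
  rcases le_or_gt c n with h | h
  · simpa [h] using hanti (Nat.zero_le (n - c).toNat)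
  · rw [← hsymm n]
    simpa [show c ≤ e - n by omega] using hanti (Nat.zero_le (e - n - c).toNat)

theorem pos_center_of_hasSum (hp : IsLogConcaveInt p) (hp1 : HasSum p 1)
    (hsymm : ∀ n, p (e - n) = p n) (hc : e ≤ 2 * c) (hc' : 2 * c ≤ e + 1) : 0 < p c := by
  obtain ⟨n, hn⟩ := exists_ne_zero_of_hasSum hp1 one_ne_zero
  exact hp.pos_center hsymm hc hc' ((hp.nonneg n).lt_of_ne hn.symm)

theorem two_mul_tsum_sq_le_of_even (hp : IsLogConcaveInt p) (hp1 : HasSum p 1)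
    (hsymm : ∀ n, p (2 * c - n) = p n) :
    2 * ∑' n : ℤ, p n * ((n : ℝ) - c) ^ 2 ≤ (p c ^ 2)⁻¹ - 1 := by
  have hu := hp.isLogConcaveNat_shift hsymm le_rfl
  have hsum := hp1.summable.comp_int_add_natCast c
  have hM : 0 < p c := hp.pos_center_of_hasSum hp1 hsymm le_rfl (by omega)
  have hM1 : p c ≤ 1 := le_hasSum hp1 c fun n _ => hp.nonneg n
  have htot : ∑' j : ℕ, p (c + j) = (1 + p c) / 2 := by
    have h := (hasSum_int_of_sub_eq_even hsymm hsum.hasSum).unique hp1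
    linarith
  -- the geometric sequence `p c * q ^ j` has the same mass as `j ↦ p (c + j)`
  set q := (1 - p c) / (1 + p c) with hq
  have h1q : 1 - q = 2 * p c / (1 + p c) := by rw [hq]; field_simp; ring
  obtain ⟨hS, hSle⟩ := hu.summable_and_tsum_mul_le hsum (q := q) (by positivity)
    (by rw [hq, div_lt_one (by linarith)]; linarith)
    (by simp only [Nat.cast_zero, add_zero, h1q, htot]; field_simp) (c := 0) (by norm_num)
  have hf := hasSum_int_of_sub_eq_even (f := fun n : ℤ => p n * ((n : ℝ) - c) ^ 2) (c := c)
    (fun n => by simp only [hsymm]; push_cast; ring)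
    (hS.hasSum.congr_fun fun j => by push_cast; ring)
  simp only [Nat.cast_zero, add_zero] at hSle hf
  have hbound : 4 * (p c * q * (2 * q + 1 * (1 - q)) / (1 - q) ^ 3) =
      (p c ^ 2)⁻¹ - 1 := by
    rw [h1q, hq]; field_simp; ring
  rw [hf.tsum_eq, sub_self, zero_pow two_ne_zero, mul_zero, sub_zero]
  linarith

theorem two_mul_tsum_sq_le_of_odd (hp : IsLogConcaveInt p) (hp1 : HasSum p 1)
    (hsymm : ∀ n, p (2 * c - 1 - n) = p n) :
    2 * ∑' n : ℤ, p n * ((n : ℝ) - (c - 1 / 2)) ^ 2 ≤ (p c ^ 2)⁻¹ - 1 := by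
  have hu := hp.isLogConcaveNat_shift hsymm (c := c) (by omega)
  have hsum := hp1.summable.comp_int_add_natCast c
  have hM : 0 < p c := hp.pos_center_of_hasSum hp1 hsymm (by omega) (by omega)
  have htot : ∑' j : ℕ, p (c + j) = 1 / 2 := by
    have h := (hasSum_int_of_sub_eq_odd hsymm hsum.hasSum).unique hp1
    linarith
  have hM2 : p c ≤ 1 / 2 := by
    simpa [htot] using hsum.le_tsum 0 fun j _ => hp.nonneg _
  -- the geometric sequence `p c * q ^ j` has the same mass as `j ↦ p (c + j)`
  set q := 1 - 2 * p c with hq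
  have h1q : 1 - q = 2 * p c := by ring
  obtain ⟨hS, hSle⟩ := hu.summable_and_tsum_mul_le hsum (q := q) (by linarith) (by linarith)
    (by simp only [Nat.cast_zero, add_zero, h1q, htot]; field_simp) (c := 1) (by norm_num)
  have hf := hasSum_int_of_sub_eq_odd (f := fun n : ℤ => p n * ((n : ℝ) - (c - 1 / 2)) ^ 2)
    (c := c) (fun n => by simp only [hsymm]; push_cast; ring)
    ((hS.hasSum.add (hsum.hasSum.mul_left (1 / 4))).congr_fun fun j => by push_cast; ring)
  rw [hf.tsum_eq, htot]
  simp only [Nat.cast_zero, add_zero] at hSle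
  have hbound : 4 * (p c * q * (2 * q + (1 + 1) * (1 - q)) / (1 - q) ^ 3) =
      (p c ^ 2)⁻¹ - 2 / p c := by
    rw [h1q, hq]; field_simp; ring
  have hM2' : 3 / 2 ≤ 2 / p c := by rw [le_div_iff₀ hM]; linarith
  linarith

theorem two_mul_tsum_sq_le (hp : IsLogConcaveInt p) (hp1 : HasSum p 1)
    (hsymm : ∀ n, p (e - n) = p n) (hc : e ≤ 2 * c) (hc' : 2 * c ≤ e + 1) :
    2 * ∑' n : ℤ, p n * ((n : ℝ) - e / 2) ^ 2 ≤ (p c ^ 2)⁻¹ - 1 := by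
  rcases (show e = 2 * c ∨ e = 2 * c - 1 by omega) with rfl | rfl
  · convert hp.two_mul_tsum_sq_le_of_even hp1 hsymm using 7
    push_cast
    ring
  · convert hp.two_mul_tsum_sq_le_of_odd hp1 hsymm using 7
    push_cast
    ring

end IsLogConcaveInt

section Probability

variable {Ω : Type*} [MeasurableSpace Ω] {μ : Measure Ω} {X : Ω → ℤ}

theorem hasSum_measure_eq_one [IsProbabilityMeasure μ] (hX : Measurable X) :
    HasSum (fun n => (μ {ω | X ω = n}).toReal) 1 := by
  have h : ∑' n, μ {ω | X ω = n} = 1 := by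
    change ∑' n : ℤ, μ (X ⁻¹' {n}) = 1
    rw [← tsum_univ, tsum_measure_preimage_singleton Set.countable_univ
      fun n _ => hX (measurableSet_singleton n)]
    simp
  have hsum := ENNReal.hasSum_toReal (h ▸ ENNReal.one_ne_top)
  rwa [← ENNReal.tsum_toReal_eq fun n => measure_ne_top μ _, h, ENNReal.toReal_one] at hsum

theorem variance_le_tsum [IsProbabilityMeasure μ] (hX : Measurable X) (a : ℝ) :
    variance (fun ω => (X ω : ℝ)) μ ≤
      ∑' n : ℤ, (μ {ω | X ω = n}).toReal * ((n : ℝ) - a) ^ 2 := by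
  have hXa : AEStronglyMeasurable (fun ω => (X ω : ℝ) - a) μ :=
    ((measurable_from_top.comp hX).sub_const a).aestronglyMeasurable
  have hg : AEStronglyMeasurable (fun n : ℤ => ((n : ℝ) - a) ^ 2) (μ.map X) :=
    measurable_from_top.aestronglyMeasurable
  calc variance (fun ω => (X ω : ℝ)) μ = variance (fun ω => (X ω : ℝ) - a) μ :=
        (variance_sub_const (measurable_from_top.comp hX).aestronglyMeasurable a).symm
    _ ≤ ∫ ω, ((X ω : ℝ) - a) ^ 2 ∂μ := variance_le_expectation_sq hXa
    _ = ∫ n, ((n : ℝ) - a) ^ 2 ∂(μ.map X) := (integral_map hX.aemeasurable hg).symm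
    _ ≤ ∑' n : ℤ, (μ {ω | X ω = n}).toReal * ((n : ℝ) - a) ^ 2 := by
        by_cases hint : Integrable (fun n : ℤ => ((n : ℝ) - a) ^ 2) (μ.map X)
        · rw [integral_countable hint]
          refine le_of_eq (tsum_congr fun n => ?_)
          rw [smul_eq_mul, measureReal_def, Measure.map_apply hX (measurableSet_singleton n)]
          rfl
        · rw [integral_undef hint]
          exact tsum_nonneg fun n => mul_nonneg ENNReal.toReal_nonneg (sq_nonneg _)

theorem exists_int_measure_sub_eq (hsymm : ∃ a : ℝ, ∀ x : ℝ,
      μ {ω | (X ω : ℝ) = a + x} = μ {ω | (X ω : ℝ) = a - x})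
    {n₀ : ℤ} (hn₀ : μ {ω | X ω = n₀} ≠ 0) :
    ∃ e : ℤ, ∀ n, μ {ω | X ω = e - n} = μ {ω | X ω = n} := by
  obtain ⟨a, ha⟩ := hsymm
  have hfiber (n : ℤ) : μ {ω | X ω = n} = μ {ω | (X ω : ℝ) = 2 * a - n} := by
    have h := ha (n - a)
    rw [add_sub_cancel, show a - (n - a) = 2 * a - n by ring] at h
    simpa using h
  obtain ⟨ω, hω⟩ := nonempty_of_measure_ne_zero (hfiber n₀ ▸ hn₀)
  refine ⟨X ω + n₀, fun n => ?_⟩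
  rw [hfiber n]
  congr 2 with ω'
  simp only [Set.mem_ofPred_eq] at hω ⊢
  rw [← Int.cast_inj (α := ℝ)]
  push_cast
  constructor <;> intro h <;> linarith

end Probability

/-- If `X` is an integer-valued random variable which is symmetric
(about some point `a ∈ ℝ`) and log-concave (its probability mass function `f`
satisfies `f(n)² ≥ f(n−1)f(n+1)` and has interval support), then
`Δ_∞(X) ≥ 2·Var(X)`. -/
theorem deltaInf_symmetric_logConcave
    {Ω : Type*} [MeasureSpace Ω] [IsProbabilityMeasure (ℙ : Measure Ω)]
    (X : Ω → ℤ) (hXm : Measurable X)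
    (hsymm : ∃ a : ℝ, ∀ x : ℝ,
      ℙ {ω | (X ω : ℝ) = a + x} = ℙ {ω | (X ω : ℝ) = a - x})
    (hlc : ∀ n : ℤ,
      (ℙ {ω | X ω = n - 1}).toReal * (ℙ {ω | X ω = n + 1}).toReal ≤
        (ℙ {ω | X ω = n}).toReal ^ 2)
    (hsupp : ∀ i j k : ℤ, i ≤ k → k ≤ j →
      0 < (ℙ {ω | X ω = i}).toReal → 0 < (ℙ {ω | X ω = j}).toReal →
      0 < (ℙ {ω | X ω = k}).toReal) :
    2 * variance (fun ω => (X ω : ℝ)) ℙ ≤ DeltaInf X := by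
  set p : ℤ → ℝ := fun n => (ℙ {ω | X ω = n}).toReal
  have hp : IsLogConcaveInt p := ⟨fun n => ENNReal.toReal_nonneg, hlc, hsupp⟩
  have hp1 : HasSum p 1 := hasSum_measure_eq_one hXm
  obtain ⟨n₀, hn₀⟩ := exists_ne_zero_of_hasSum hp1 one_ne_zero
  obtain ⟨e, he⟩ :=
    exists_int_measure_sub_eq hsymm (n₀ := n₀) fun h => hn₀ (by simp [p, h])
  have hsymm_p : ∀ n, p (e - n) = p n := fun n => by simp only [p, he]
  have hc : e ≤ 2 * (e - e / 2) := by omega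
  have hc' : 2 * (e - e / 2) ≤ e + 1 := by omega
  have hmode := hp.le_center hsymm_p hc hc' (hp.pos_center_of_hasSum hp1 hsymm_p hc hc')
  have hsup : ⨆ n, p n = p (e - e / 2) :=
    le_antisymm (ciSup_le hmode) (le_ciSup ⟨_, Set.forall_mem_range.2 hmode⟩ _)
  calc 2 * variance (fun ω => (X ω : ℝ)) ℙ
      ≤ 2 * ∑' n : ℤ, p n * ((n : ℝ) - e / 2) ^ 2 := by gcongr; exact variance_le_tsum hXm _
    _ ≤ (p (e - e / 2) ^ 2)⁻¹ - 1 := hp.two_mul_tsum_sq_le hp1 hsymm_p hc hc'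
    _ = DeltaInf X := by rw [DeltaInf, hsup]
end

section
/- Let X be a Bernoulli random variable. Then for every t ∈ [−π, π], |E[e^{itX}]| ≤ exp(−Δ_∞(X)·t²/24). -/
/-!
With `θ = P(X = 1)` and `m = max θ (1 - θ)`, one has `|E e^{itX}|² = 1 - 4m(1-m) sin²(t/2)` and
`Δ_∞(X) = m⁻² - 1`. The bound `cos² x ≤ e^{-x²}` on `[-π/2, π/2]` (from `x ≤ tan x`) reduces the
claim to `1 - 4m(1-m)(1 - y) ≤ y ^ p` for `y = e^{-t²/4} ∈ [e^{-π²/4}, 1]` and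
`p = (m⁻² - 1)/3 ∈ [0, 1]`. The left side is affine in `y` and the right side concave, so it
suffices to check `y = 1`, where both sides are `1`, and `y = e^{-π²/4}`, a numerical inequality
in `m` alone, proved separately for `m ≤ 3/4` and `m ≥ 3/4`.
-/

open MeasureTheory ProbabilityTheory Real

open Set

lemma add_mul_le_rpow_of_mem_Icc {p c d x₀ x₁ x : ℝ} (hp₀ : 0 ≤ p) (hp₁ : p ≤ 1) (hx₀ : 0 ≤ x₀)
    (h₀ : c + d * x₀ ≤ x₀ ^ p) (h₁ : c + d * x₁ ≤ x₁ ^ p) (hx : x ∈ Icc x₀ x₁) :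
    c + d * x ≤ x ^ p := by
  have hx₀₁ : x₀ ≤ x₁ := hx.1.trans hx.2
  have hconc : ConcaveOn ℝ (Ici 0) fun y : ℝ => y ^ p - (d * y + c) :=
    (concaveOn_rpow hp₀ hp₁).sub
      ((LinearMap.convexOn (LinearMap.mulLeft ℝ d) (convex_Ici 0)).add_const c)
  have hmin := hconc.ge_on_segment (mem_Ici.2 hx₀) (mem_Ici.2 (hx₀.trans hx₀₁))
    (by rwa [segment_eq_Icc hx₀₁])
  have : 0 ≤ min (x₀ ^ p - (d * x₀ + c)) (x₁ ^ p - (d * x₁ + c)) :=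
    le_min (by linarith) (by linarith)
  linarith

lemma exp_pi_sq_div_four_le : exp (π ^ 2 / 4) ≤ 13 := by
  have hsq : exp (5 / 2) ^ 2 = exp 1 ^ 5 := by
    rw [← exp_nat_mul, ← exp_nat_mul]; norm_num
  have he : exp 1 ^ 5 < 2.7182818286 ^ 5 :=
    pow_lt_pow_left₀ exp_one_lt_d9 (exp_pos 1).le (by norm_num)
  calc exp (π ^ 2 / 4) ≤ exp (5 / 2) := exp_le_exp.2 (by nlinarith [pi_lt_d2, pi_pos])
    _ ≤ 13 := by nlinarith [exp_pos (5 / 2)]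

lemma exp_neg_pi_sq_div_four_le : exp (-(π ^ 2 / 4)) ≤ 1 / 8 := by
  have hsq : exp (π ^ 2 / 8) ^ 2 = exp (π ^ 2 / 4) := by
    rw [← exp_nat_mul]; ring_nf
  have hquad := quadratic_le_exp_of_nonneg (x := π ^ 2 / 8) (by positivity)
  have hy : 1.2 ≤ π ^ 2 / 8 := by nlinarith [pi_gt_d2]
  have h8 : 8 ≤ exp (π ^ 2 / 4) := by nlinarith
  rw [exp_neg, inv_le_comm₀ (exp_pos _) (by norm_num)]
  linarith

lemma one_sub_mul_one_sub_exp_neg_pi_sq_le_of_le_three_quarters {m : ℝ} (hm : 1 / 2 ≤ m)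
    (hm1 : m ≤ 3 / 4) :
    1 - 4 * m * (1 - m) * (1 - exp (-(π ^ 2 / 4))) ≤
      exp (-((m ^ 2)⁻¹ - 1) * (π ^ 2 / 4) / 3) := by
  set Q := π ^ 2 / 4 with hQ
  have hQ_lb : 2.46 ≤ Q := by nlinarith [pi_gt_d2]
  have hm0 : 0 < m := by linarith
  set w := Q * ((4 * m ^ 2 - 1) / (3 * m ^ 2)) with hw
  -- `(4m² - 1) / (3m²)` is concave in `m`, so it dominates its chord over `[1/2, 3/4]`
  have hchord : 40 / 27 * (2 * m - 1) ≤ (4 * m ^ 2 - 1) / (3 * m ^ 2) := by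
    rw [le_div_iff₀ (by positivity)]
    nlinarith [mul_nonneg (mul_nonneg (sub_nonneg.2 hm) (sub_nonneg.2 hm1))
      (by linarith : (0 : ℝ) ≤ m + 3 / 10)]
  have hw_lb : 40 / 27 * 2.46 * (2 * m - 1) ≤ w := by
    rw [hw]; nlinarith
  have hpoly : (2 * m - 1) ^ 2 * (exp Q - 1) ≤ w + w ^ 2 / 2 := by
    nlinarith [exp_pi_sq_div_four_le]
  have hinv : exp (-Q) * exp Q = 1 := by rw [← exp_add]; simp
  calc 1 - 4 * m * (1 - m) * (1 - exp (-Q))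
      = exp (-Q) * (1 + (2 * m - 1) ^ 2 * (exp Q - 1)) := by
        linear_combination (-(2 * m - 1) ^ 2) * hinv
    _ ≤ exp (-Q) * (1 + w + w ^ 2 / 2) := mul_le_mul_of_nonneg_left (by linarith) (exp_pos _).le
    _ ≤ exp (-Q) * exp w := by gcongr; exact quadratic_le_exp_of_nonneg (by nlinarith)
    _ = exp (-((m ^ 2)⁻¹ - 1) * Q / 3) := by
        rw [← exp_add, hw]; congr 1; field_simp; ring

lemma one_sub_mul_one_sub_exp_neg_pi_sq_le_of_three_quarters_le {m : ℝ} (hm : 3 / 4 ≤ m)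
    (hm1 : m ≤ 1) :
    1 - 4 * m * (1 - m) * (1 - exp (-(π ^ 2 / 4))) ≤
      exp (-((m ^ 2)⁻¹ - 1) * (π ^ 2 / 4) / 3) := by
  have hQ : π ^ 2 / 4 ≤ 2.4675 := by nlinarith [pi_lt_d4, pi_pos]
  have hm0 : 0 < m := by linarith
  have hfac : (m ^ 2)⁻¹ - 1 = (1 - m ^ 2) * (m ^ 2)⁻¹ := by field_simp
  have hinv : (m ^ 2)⁻¹ ≤ 16 / 9 := by
    rw [inv_le_comm₀ (by positivity) (by norm_num)]; nlinarith
  have hΔ : (m ^ 2)⁻¹ - 1 ≤ (1 - m ^ 2) * (16 / 9) := by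
    rw [hfac]; exact mul_le_mul_of_nonneg_left hinv (by nlinarith)
  have hrate : ((m ^ 2)⁻¹ - 1) * (π ^ 2 / 4) / 3 ≤
      4 * m * (1 - m) * (1 - exp (-(π ^ 2 / 4))) :=
    calc ((m ^ 2)⁻¹ - 1) * (π ^ 2 / 4) / 3
        ≤ (1 - m ^ 2) * (16 / 9) * 2.4675 / 3 := by gcongr; nlinarith
      _ ≤ 4 * m * (1 - m) * (7 / 8) := by nlinarith
      _ ≤ 4 * m * (1 - m) * (1 - exp (-(π ^ 2 / 4))) := by
        gcongr; linarith [exp_neg_pi_sq_div_four_le]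
  linarith [add_one_le_exp (-((m ^ 2)⁻¹ - 1) * (π ^ 2 / 4) / 3)]

lemma one_sub_mul_one_sub_exp_le_exp {m q : ℝ} (hm : 1 / 2 ≤ m) (hm1 : m ≤ 1) (hq : 0 ≤ q)
    (hqQ : q ≤ π ^ 2 / 4) :
    1 - 4 * m * (1 - m) * (1 - exp (-q)) ≤ exp (-((m ^ 2)⁻¹ - 1) * q / 3) := by
  have hm0 : 0 < m := by linarith
  set p := ((m ^ 2)⁻¹ - 1) / 3 with hp
  have hp₀ : 0 ≤ p := by
    have : 1 ≤ (m ^ 2)⁻¹ := (one_le_inv₀ (by positivity)).2 (by nlinarith)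
    linarith
  have hp₁ : p ≤ 1 := by
    have : (m ^ 2)⁻¹ ≤ 4 := by rw [inv_le_comm₀ (by positivity) (by norm_num)]; nlinarith
    linarith
  have hrpow (y : ℝ) : exp (-((m ^ 2)⁻¹ - 1) * y / 3) = exp (-y) ^ p := by
    rw [← exp_mul, hp]; congr 1; ring
  have hend : 1 - 4 * m * (1 - m) + 4 * m * (1 - m) * exp (-(π ^ 2 / 4)) ≤
      exp (-(π ^ 2 / 4)) ^ p := by
    rw [← hrpow]
    rcases le_total m (3 / 4) with h | h
    · linarith [one_sub_mul_one_sub_exp_neg_pi_sq_le_of_le_three_quarters hm h]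
    · linarith [one_sub_mul_one_sub_exp_neg_pi_sq_le_of_three_quarters_le h hm1]
  have := add_mul_le_rpow_of_mem_Icc hp₀ hp₁ (exp_pos _).le hend
    (x₁ := 1) (by rw [one_rpow]; linarith)
    (x := exp (-q)) ⟨exp_le_exp.2 (by linarith), exp_le_one_iff.2 (by linarith)⟩
  rw [hrpow]
  linarith

lemma cos_le_exp_neg_sq_div_two {x : ℝ} (hx₀ : 0 ≤ x) (hx : x ≤ π / 2) :
    cos x ≤ exp (-(x ^ 2 / 2)) := by
  have hderiv (y : ℝ) : HasDerivAt (fun y => cos y * exp (y ^ 2 / 2))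
      ((y * cos y - sin y) * exp (y ^ 2 / 2)) y := by
    refine ((hasDerivAt_cos y).mul ((hasDerivAt_pow 2 y).div_const 2).exp).congr_deriv ?_
    push_cast
    ring
  have hanti : AntitoneOn (fun y => cos y * exp (y ^ 2 / 2)) (Icc 0 (π / 2)) := by
    refine antitoneOn_of_deriv_nonpos (convex_Icc _ _)
      (fun y _ => (hderiv y).continuousAt.continuousWithinAt)
      (fun y _ => (hderiv y).differentiableAt.differentiableWithinAt) fun y hy => ?_
    rw [interior_Icc] at hy
    have hcos : 0 < cos y := cos_pos_of_mem_Ioo ⟨by linarith [hy.1, pi_pos], hy.2⟩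
    have hy_le : y * cos y ≤ sin y := by
      have := le_tan hy.1.le hy.2
      rwa [tan_eq_sin_div_cos, le_div_iff₀ hcos] at this
    rw [(hderiv y).deriv]
    exact mul_nonpos_of_nonpos_of_nonneg (by linarith) (exp_pos _).le
  have h1 : cos x * exp (x ^ 2 / 2) ≤ 1 := by
    simpa using hanti ⟨le_rfl, by positivity⟩ ⟨hx₀, hx⟩ hx₀
  calc cos x = cos x * exp (x ^ 2 / 2) * exp (-(x ^ 2 / 2)) := by
        rw [mul_assoc, ← exp_add]; simp
    _ ≤ exp (-(x ^ 2 / 2)) := by nlinarith [exp_pos (-(x ^ 2 / 2))]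

lemma cos_sq_le_exp_neg_sq {x : ℝ} (hx : |x| ≤ π / 2) : cos x ^ 2 ≤ exp (-x ^ 2) := by
  rw [← cos_abs]
  have hcos : 0 ≤ cos |x| := cos_nonneg_of_mem_Icc ⟨by linarith [abs_nonneg x, pi_pos], hx⟩
  calc cos |x| ^ 2 ≤ exp (-(|x| ^ 2 / 2)) ^ 2 :=
        pow_le_pow_left₀ hcos (cos_le_exp_neg_sq_div_two (abs_nonneg x) hx) 2
    _ = exp (-x ^ 2) := by rw [← exp_nat_mul, sq_abs]; ring_nf

lemma norm_sq_one_sub_smul_one_add_smul_exp (θ t : ℝ) :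
    ‖(1 - θ) • (1 : ℂ) + θ • Complex.exp (t * Complex.I)‖ ^ 2 =
      1 - 4 * θ * (1 - θ) * sin (t / 2) ^ 2 := by
  rw [← Complex.normSq_eq_norm_sq, Complex.normSq_apply]
  simp only [Complex.add_re, Complex.add_im, Complex.smul_re, Complex.smul_im, Complex.one_re,
    Complex.one_im, Complex.exp_ofReal_mul_I_re, Complex.exp_ofReal_mul_I_im, smul_eq_mul]
  have hcos : cos t = 1 - 2 * sin (t / 2) ^ 2 := by
    have := cos_sq (t / 2)
    rw [mul_div_cancel₀ t two_ne_zero] at this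
    linarith [sin_sq_add_cos_sq (t / 2)]
  linear_combination θ ^ 2 * sin_sq_add_cos_sq t + 2 * θ * (1 - θ) * hcos

section ZeroOne

variable {Ω : Type*} {X : Ω → ℤ}

lemma setOf_eq_zero_eq_compl (hX01 : ∀ ω, X ω = 0 ∨ X ω = 1) :
    {ω | X ω = 0} = {ω | X ω = 1}ᶜ := by
  ext ω
  rcases hX01 ω with h | h <;> simp [h]

variable [MeasurableSpace Ω] (μ : Measure Ω) [IsProbabilityMeasure μ]

lemma integral_comp_of_forall_eq_zero_or_eq_one {E : Type*} [NormedAddCommGroup E]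
    [NormedSpace ℝ E] [CompleteSpace E] (hX : Measurable X) (hX01 : ∀ ω, X ω = 0 ∨ X ω = 1)
    (g : ℤ → E) :
    ∫ ω, g (X ω) ∂μ = (1 - μ.real {ω | X ω = 1}) • g 0 + μ.real {ω | X ω = 1} • g 1 := by
  have hA : MeasurableSet {ω | X ω = 1} := hX (measurableSet_singleton 1)
  have hsplit : (fun ω => g (X ω)) = fun ω =>
      {ω | X ω = 1}ᶜ.indicator (fun _ => g 0) ω + {ω | X ω = 1}.indicator (fun _ => g 1) ω := by
    ext ω
    rcases hX01 ω with h | h <;> simp [h]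
  rw [hsplit, integral_add ((integrable_const _).indicator hA.compl)
    ((integrable_const _).indicator hA), integral_indicator_const _ hA.compl,
    integral_indicator_const _ hA, probReal_compl_eq_one_sub hA]

lemma iSup_measureReal_eq_max (hX : Measurable X) (hX01 : ∀ ω, X ω = 0 ∨ X ω = 1) :
    ⨆ n : ℤ, μ.real {ω | X ω = n} =
      max (1 - μ.real {ω | X ω = 1}) (μ.real {ω | X ω = 1}) := by
  have hA : MeasurableSet {ω | X ω = 1} := hX (measurableSet_singleton 1)
  have hle (n : ℤ) :
      μ.real {ω | X ω = n} ≤ max (1 - μ.real {ω | X ω = 1}) (μ.real {ω | X ω = 1}) := by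
    by_cases h0 : n = 0
    · rw [h0, setOf_eq_zero_eq_compl hX01, probReal_compl_eq_one_sub hA]
      exact le_max_left _ _
    by_cases h1 : n = 1
    · rw [h1]
      exact le_max_right _ _
    have hempty : {ω | X ω = n} = ∅ := by
      ext ω
      rcases hX01 ω with h | h <;> simp [h] <;> omega
    rw [hempty, measureReal_empty]
    exact le_max_of_le_right measureReal_nonneg
  have hbdd : BddAbove (range fun n : ℤ => μ.real {ω | X ω = n}) :=
    ⟨_, forall_mem_range.2 hle⟩
  refine le_antisymm (ciSup_le hle) (max_le ?_ (le_ciSup hbdd 1))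
  rw [← probReal_compl_eq_one_sub hA, ← setOf_eq_zero_eq_compl hX01]
  exact le_ciSup hbdd 0

end ZeroOne

lemma deltaInf_eq_inv_max_sq_sub_one {Ω : Type*} [MeasureSpace Ω]
    [IsProbabilityMeasure (ℙ : Measure Ω)] {X : Ω → ℤ} (hX : Measurable X)
    (hX01 : ∀ ω, X ω = 0 ∨ X ω = 1) :
    DeltaInf X = (max (1 - (ℙ : Measure Ω).real {ω | X ω = 1})
      ((ℙ : Measure Ω).real {ω | X ω = 1}) ^ 2)⁻¹ - 1 := by
  simp only [DeltaInf, ← measureReal_def, iSup_measureReal_eq_max _ hX hX01]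

lemma one_sub_mul_sin_sq_le_exp {θ t : ℝ} (hθ₀ : 0 ≤ θ) (hθ₁ : θ ≤ 1) (ht : |t| ≤ π) :
    1 - 4 * θ * (1 - θ) * sin (t / 2) ^ 2 ≤ exp (-((max (1 - θ) θ ^ 2)⁻¹ - 1) * t ^ 2 / 12) := by
  set m := max (1 - θ) θ
  have hm : 1 / 2 ≤ m := by linarith [le_max_left (1 - θ) θ, le_max_right (1 - θ) θ]
  have hm1 : m ≤ 1 := max_le (by linarith) hθ₁
  have hvar : θ * (1 - θ) = m * (1 - m) := by
    rcases max_choice (1 - θ) θ with h | h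
    · rw [show m = 1 - θ from h]; ring
    · rw [show m = θ from h]
  have hcos : cos (t / 2) ^ 2 ≤ exp (-(t / 2) ^ 2) :=
    cos_sq_le_exp_neg_sq (by rw [abs_div, abs_two]; linarith)
  calc 1 - 4 * θ * (1 - θ) * sin (t / 2) ^ 2
      = 1 - 4 * m * (1 - m) * (1 - cos (t / 2) ^ 2) := by
        linear_combination (-4 * sin (t / 2) ^ 2) * hvar -
          4 * m * (1 - m) * sin_sq_add_cos_sq (t / 2)
    _ ≤ 1 - 4 * m * (1 - m) * (1 - exp (-(t / 2) ^ 2)) := by gcongr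
    _ ≤ exp (-((m ^ 2)⁻¹ - 1) * (t / 2) ^ 2 / 3) :=
      one_sub_mul_one_sub_exp_le_exp hm hm1 (by positivity)
        (by nlinarith [abs_nonneg t, sq_abs t])
    _ = exp (-((m ^ 2)⁻¹ - 1) * t ^ 2 / 12) := by congr 1; ring

/-- For a Bernoulli random variable `X` (taking only the values `0`
and `1`) and every `t ∈ [−π, π]`, `|E[e^{itX}]| ≤ exp(−Δ_∞(X)·t²/24)`. -/
theorem bernoulli_charfun_exp_bound
    {Ω : Type*} [MeasureSpace Ω] [IsProbabilityMeasure (ℙ : Measure Ω)]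
    (X : Ω → ℤ) (hXm : Measurable X) (hX01 : ∀ ω, X ω = 0 ∨ X ω = 1)
    (t : ℝ) (ht : t ∈ Set.Icc (-π) π) :
    ‖∫ ω, Complex.exp ((t * (X ω : ℝ) : ℝ) * Complex.I) ∂ℙ‖ ≤
      Real.exp (-(DeltaInf X * t ^ 2) / 24) := by
  refine le_of_pow_le_pow_left₀ two_ne_zero (exp_pos _).le ?_
  rw [integral_comp_of_forall_eq_zero_or_eq_one _ hXm hX01
    (fun n : ℤ => Complex.exp ((t * (n : ℝ) : ℝ) * Complex.I))]
  simp only [Int.cast_zero, mul_zero, Complex.ofReal_zero, zero_mul, Complex.exp_zero,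
    Int.cast_one, mul_one]
  rw [norm_sq_one_sub_smul_one_add_smul_exp, deltaInf_eq_inv_max_sq_sub_one hXm hX01,
    ← exp_nat_mul]
  refine (one_sub_mul_sin_sq_le_exp (θ := (ℙ : Measure Ω).real {ω | X ω = 1})
    measureReal_nonneg measureReal_le_one (abs_le.2 ht)).trans_eq ?_
  congr 1
  push_cast
  ring
end

section
/- Let B_1, …, B_n be mutually independent Bernoulli random variables and let v_1, …, v_n be nonzero real numbers. Then sup_{x∈ℝ} P(v_1 B_1 + ⋯ + v_n B_n = x) ≤ max_{a ∈ {−1,+1}^n} sup_{x∈ℝ} P(a_1 B_1 + ⋯ + a_n B_n = x). -/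
/-!
Flipping `B i` to `1 - B i` wherever `v i < 0` turns the coefficients `v` into `|v|` and the
signs of `v` into all ones, shifting both sums by constants. Since the `|v i|` are positive, the
sets `T` with `∑ i ∈ T, |v i| = x` form an antichain, so it suffices to know that under the
product Bernoulli measure on the cube an antichain weighs at most as much as the heaviest level
`{T | #T = k}`, the event that exactly `k` of the flipped variables equal `1`. This weighted
Sperner theorem follows from the weighted LYM inequality, which comes from the normalized
matching property of the product measure; that is proved by induction on the ground set, using
log-concavity of the level weights. Parameters on the boundary of `[0, 1]` are reached by
continuity.
-/

open MeasureTheory ProbabilityTheory Real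

open Finset

namespace LittlewoodOfford

variable {ι : Type*} [DecidableEq ι] {p : ι → ℝ} {s : Finset ι} {a : ι}
  {𝒜 ℬ : Finset (Finset ι)}

-- The product Bernoulli(`p`) measure of `T ∩ s` on the cube of subsets of `s`.
noncomputable def cubeWeight (p : ι → ℝ) (s T : Finset ι) : ℝ :=
  ∏ i ∈ s, if i ∈ T then p i else 1 - p i

noncomputable def familyWeight (p : ι → ℝ) (s : Finset ι) (𝒜 : Finset (Finset ι)) : ℝ :=
  ∑ T ∈ 𝒜, cubeWeight p s T

-- Indexed by `ℤ` so that `levelWeight_insert` holds at `k = 0` too.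
noncomputable def levelWeight (p : ι → ℝ) (s : Finset ι) (k : ℤ) : ℝ :=
  familyWeight p s {T ∈ s.powerset | (#T : ℤ) = k}

lemma cubeWeight_nonneg (hp : ∀ i ∈ s, p i ∈ Set.Icc 0 1) (T : Finset ι) :
    0 ≤ cubeWeight p s T :=
  prod_nonneg fun i hi => by
    have := hp i hi
    split_ifs <;> simp only [Set.mem_Icc] at this <;> linarith

lemma cubeWeight_pos (hp : ∀ i ∈ s, p i ∈ Set.Ioo 0 1) (T : Finset ι) :
    0 < cubeWeight p s T :=
  prod_pos fun i hi => by
    have := hp i hi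
    split_ifs <;> simp only [Set.mem_Ioo] at this <;> linarith

lemma cubeWeight_insert (ha : a ∉ s) (T : Finset ι) :
    cubeWeight p (insert a s) T = (if a ∈ T then p a else 1 - p a) * cubeWeight p s T :=
  prod_insert ha

lemma cubeWeight_erase (ha : a ∉ s) (T : Finset ι) :
    cubeWeight p s (T.erase a) = cubeWeight p s T :=
  prod_congr rfl fun i hi => by simp [ne_of_mem_of_not_mem hi ha]

lemma familyWeight_nonneg (hp : ∀ i ∈ s, p i ∈ Set.Icc 0 1) (𝒜 : Finset (Finset ι)) :
    0 ≤ familyWeight p s 𝒜 :=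
  sum_nonneg fun T _ => cubeWeight_nonneg hp T

lemma familyWeight_mono (hp : ∀ i ∈ s, p i ∈ Set.Icc 0 1) (h : 𝒜 ⊆ ℬ) :
    familyWeight p s 𝒜 ≤ familyWeight p s ℬ :=
  sum_le_sum_of_subset_of_nonneg h fun T _ _ => cubeWeight_nonneg hp T

lemma familyWeight_union (h : Disjoint 𝒜 ℬ) :
    familyWeight p s (𝒜 ∪ ℬ) = familyWeight p s 𝒜 + familyWeight p s ℬ :=
  sum_union h

lemma familyWeight_insert (ha : a ∉ s) (𝒜 : Finset (Finset ι)) :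
    familyWeight p (insert a s) 𝒜 =
      (1 - p a) * familyWeight p s (𝒜.nonMemberSubfamily a) +
        p a * familyWeight p s (𝒜.memberSubfamily a) := by
  have hmember : familyWeight p s (𝒜.memberSubfamily a) = ∑ T ∈ 𝒜 with a ∈ T, cubeWeight p s T := by
    rw [familyWeight, memberSubfamily, sum_image]
    · exact sum_congr rfl fun T _ => cubeWeight_erase ha T
    · exact (erase_injOn' a).mono fun T hT => (mem_filter.1 hT).2
  rw [hmember, familyWeight, familyWeight, nonMemberSubfamily, mul_sum, mul_sum,
    ← sum_filter_add_sum_filter_not 𝒜 (a ∈ ·), add_comm]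
  congr 1 <;> refine sum_congr rfl fun T hT => ?_ <;>
    simp [cubeWeight_insert ha, (mem_filter.1 hT).2]

lemma levelWeight_insert (ha : a ∉ s) (k : ℤ) :
    levelWeight p (insert a s) k =
      (1 - p a) * levelWeight p s k + p a * levelWeight p s (k - 1) := by
  rw [levelWeight, familyWeight_insert ha, levelWeight, levelWeight]
  congr 3 <;> ext T
  · simp only [mem_nonMemberSubfamily, mem_filter, mem_powerset]
    constructor
    · rintro ⟨⟨hT, hk⟩, haT⟩
      exact ⟨(subset_insert_iff_of_notMem haT).1 hT, hk⟩
    · rintro ⟨hT, hk⟩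
      exact ⟨⟨hT.trans (subset_insert a s), hk⟩, fun h => ha (hT h)⟩
  · simp only [mem_memberSubfamily, mem_filter, mem_powerset]
    constructor
    · rintro ⟨⟨hT, hk⟩, haT⟩
      rw [card_insert_of_notMem haT] at hk
      exact ⟨(insert_subset_insert_iff haT).1 hT, by omega⟩
    · rintro ⟨hT, hk⟩
      have haT : a ∉ T := fun h => ha (hT h)
      exact ⟨⟨insert_subset_insert a hT, by rw [card_insert_of_notMem haT]; omega⟩, haT⟩

lemma levelWeight_nonneg (hp : ∀ i ∈ s, p i ∈ Set.Icc 0 1) (k : ℤ) : 0 ≤ levelWeight p s k :=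
  familyWeight_nonneg hp _

lemma levelWeight_eq_zero {k : ℤ} (hk : k < 0 ∨ #s < k) : levelWeight p s k = 0 := by
  refine sum_eq_zero fun T hT => ?_
  obtain ⟨hTs, rfl⟩ := mem_filter.1 hT
  have := card_le_card (mem_powerset.1 hTs)
  omega

lemma levelWeight_pos (hp : ∀ i ∈ s, p i ∈ Set.Ioo 0 1) {k : ℕ} (hk : k ≤ #s) :
    0 < levelWeight p s k := by
  obtain ⟨T, hTs, hT⟩ := exists_subset_card_eq hk
  exact sum_pos' (fun T _ => (cubeWeight_pos hp T).le)
    ⟨T, by simp [hTs, hT], cubeWeight_pos hp T⟩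

lemma familyWeight_le_levelWeight (hp : ∀ i ∈ s, p i ∈ Set.Icc 0 1) {k : ℕ}
    (h𝒜 : 𝒜 ⊆ s.powersetCard k) : familyWeight p s 𝒜 ≤ levelWeight p s k :=
  familyWeight_mono hp fun T hT => by simpa using mem_powersetCard.1 (h𝒜 hT)

-- Log-concavity of the level weights, in a division-free form that needs no positivity.
lemma levelWeight_succ_mul_le (hp : ∀ i ∈ s, p i ∈ Set.Icc 0 1) {i j : ℤ} (hji : j ≤ i) :
    levelWeight p s (i + 1) * levelWeight p s j ≤ levelWeight p s i * levelWeight p s (j + 1) := by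
  induction s using Finset.induction_on generalizing i j with
  | empty =>
    have hL : ∀ k : ℤ, k ≠ 0 → levelWeight p ∅ k = 0 := fun k hk =>
      levelWeight_eq_zero (by simp only [card_empty, Nat.cast_zero]; omega)
    rcases eq_or_ne (i + 1) 0 with hi | hi
    · rw [hL j (by omega), mul_zero]
      exact mul_nonneg (levelWeight_nonneg hp _) (levelWeight_nonneg hp _)
    · rw [hL _ hi, zero_mul]
      exact mul_nonneg (levelWeight_nonneg hp _) (levelWeight_nonneg hp _)
  | insert a s ha ih =>
    have hp' : ∀ i ∈ s, p i ∈ Set.Icc 0 1 := fun i hi => hp i (mem_insert_of_mem hi)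
    obtain ⟨hpa, hpa'⟩ := hp a (mem_insert_self a s)
    simp only [levelWeight_insert ha, add_sub_cancel_right]
    set L := levelWeight p s
    have outer := ih hp' hji
    have inner : L i * L (j - 1) ≤ L (i - 1) * L j := by
      simpa using ih hp' (i := i - 1) (j := j - 1) (by omega)
    have cross : L (i + 1) * L (j - 1) ≤ L (i - 1) * L (j + 1) := by
      rcases hji.lt_or_eq with hji | rfl
      · calc L (i + 1) * L (j - 1) ≤ L i * L j := by simpa using ih hp' (j := j - 1) (by omega)
          _ ≤ L (i - 1) * L (j + 1) := by simpa using ih hp' (i := i - 1) (by omega)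
      · exact (mul_comm _ _).le
    have hq : 0 ≤ 1 - p a := by linarith
    nlinarith [mul_le_mul_of_nonneg_left outer (mul_nonneg hq hq),
      mul_le_mul_of_nonneg_left inner (mul_nonneg hpa hpa),
      mul_le_mul_of_nonneg_left cross (mul_nonneg hq hpa)]

lemma shadow_nonMemberSubfamily_union_memberSubfamily_subset :
    (𝒜.nonMemberSubfamily a).shadow ∪ 𝒜.memberSubfamily a ⊆ 𝒜.shadow.nonMemberSubfamily a := by
  intro R hR
  simp only [mem_union, mem_shadow_iff_insert_mem, mem_nonMemberSubfamily,
    mem_memberSubfamily, mem_insert, not_or] at hR ⊢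
  rcases hR with ⟨b, hbR, hb𝒜, -, haR⟩ | ⟨ha𝒜, haR⟩
  · exact ⟨⟨b, hbR, hb𝒜⟩, haR⟩
  · exact ⟨⟨a, haR, ha𝒜⟩, haR⟩

lemma shadow_memberSubfamily_subset :
    (𝒜.memberSubfamily a).shadow ⊆ 𝒜.shadow.memberSubfamily a := by
  intro R hR
  simp only [mem_shadow_iff_insert_mem, mem_memberSubfamily, mem_insert, not_or] at hR ⊢
  obtain ⟨b, hbR, hab𝒜, hab, haR⟩ := hR
  exact ⟨⟨b, ⟨Ne.symm hab, hbR⟩, by rwa [insert_comm]⟩, haR⟩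

-- The induction step of `familyWeight_mul_levelWeight_le_shadow`, with `q = 1 - p a`, `r = p a`
-- and `M₀, M₁, M₂` three consecutive level weights.
lemma mixture_mul_le_mixture_mul {q r A₀ A₁ B₁ C M₀ M₁ M₂ : ℝ} (hq : 0 ≤ q) (hr : 0 ≤ r)
    (hM₀ : 0 ≤ M₀) (hM₁ : 0 < M₁) (hM₂ : 0 ≤ M₂) (h₀ : A₀ * M₁ ≤ C * M₀)
    (h₁ : A₁ * M₂ ≤ B₁ * M₁) (hA₁ : A₁ ≤ C) (hM : M₀ * M₂ ≤ M₁ * M₁) :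
    (q * A₀ + r * A₁) * (q * M₁ + r * M₂) ≤ (q * C + r * B₁) * (q * M₀ + r * M₁) := by
  have cross : A₀ * M₂ + A₁ * M₁ ≤ C * M₁ + B₁ * M₀ := by
    refine le_of_mul_le_mul_left ?_ hM₁
    nlinarith [mul_le_mul_of_nonneg_right h₀ hM₂, mul_le_mul_of_nonneg_right h₁ hM₀,
      mul_le_mul_of_nonneg_left hM (sub_nonneg.2 hA₁)]
  nlinarith [mul_le_mul_of_nonneg_left h₀ (mul_nonneg hq hq),
    mul_le_mul_of_nonneg_left h₁ (mul_nonneg hr hr),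
    mul_le_mul_of_nonneg_left cross (mul_nonneg hq hr)]

lemma nonMemberSubfamily_subset_powersetCard {k : ℕ} (h𝒜 : 𝒜 ⊆ (insert a s).powersetCard k) :
    𝒜.nonMemberSubfamily a ⊆ s.powersetCard k := fun T hT => by
  obtain ⟨hT𝒜, haT⟩ := mem_nonMemberSubfamily.1 hT
  obtain ⟨hTs, hTk⟩ := mem_powersetCard.1 (h𝒜 hT𝒜)
  exact mem_powersetCard.2 ⟨(subset_insert_iff_of_notMem haT).1 hTs, hTk⟩

lemma memberSubfamily_subset_powersetCard {k : ℕ}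
    (h𝒜 : 𝒜 ⊆ (insert a s).powersetCard (k + 1)) : 𝒜.memberSubfamily a ⊆ s.powersetCard k :=
  fun T hT => by
    obtain ⟨hT𝒜, haT⟩ := mem_memberSubfamily.1 hT
    obtain ⟨hTs, hTk⟩ := mem_powersetCard.1 (h𝒜 hT𝒜)
    rw [card_insert_of_notMem haT, Nat.add_right_cancel_iff] at hTk
    exact mem_powersetCard.2 ⟨(insert_subset_insert_iff haT).1 hTs, hTk⟩

theorem familyWeight_mul_levelWeight_le_shadow (hp : ∀ i ∈ s, p i ∈ Set.Ioo 0 1) {k : ℕ}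
    (h𝒜 : 𝒜 ⊆ s.powersetCard (k + 1)) :
    familyWeight p s 𝒜 * levelWeight p s k ≤
      familyWeight p s 𝒜.shadow * levelWeight p s (k + 1) := by
  induction s using Finset.induction_on generalizing k 𝒜 with
  | empty => simp [subset_empty.1 (h𝒜.trans (powersetCard_eq_empty.2 (by simp)).le), familyWeight]
  | insert a s ha ih =>
    by_cases hk : #(insert a s) < k + 1
    · simp [subset_empty.1 (h𝒜.trans (powersetCard_eq_empty.2 hk).le), familyWeight]
    obtain ⟨hpa₀, hpa₁⟩ := hp a (mem_insert_self a s)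
    have hq : 0 ≤ 1 - p a := by linarith
    have hps : ∀ i ∈ s, p i ∈ Set.Ioo 0 1 := fun i hi => hp i (mem_insert_of_mem hi)
    have hps₀ : ∀ i ∈ s, p i ∈ Set.Icc 0 1 := fun i hi => Set.Ioo_subset_Icc_self (hps i hi)
    rw [card_insert_of_notMem ha] at hk
    have h₀ := ih hps (nonMemberSubfamily_subset_powersetCard h𝒜)
    have h₁ : familyWeight p s (𝒜.memberSubfamily a) * levelWeight p s (k - 1) ≤
        familyWeight p s (𝒜.memberSubfamily a).shadow * levelWeight p s k := by
      cases k with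
      | zero =>
        rw [levelWeight_eq_zero (.inl (by norm_num)), mul_zero]
        exact mul_nonneg (familyWeight_nonneg hps₀ _) (levelWeight_nonneg hps₀ _)
      | succ j => simpa using ih hps (memberSubfamily_subset_powersetCard h𝒜)
    have hM := levelWeight_succ_mul_le hps₀ (i := k) (j := k - 1) (by omega)
    rw [sub_add_cancel] at hM
    calc familyWeight p (insert a s) 𝒜 * levelWeight p (insert a s) k
        ≤ ((1 - p a) * familyWeight p s ((𝒜.nonMemberSubfamily a).shadow ∪ 𝒜.memberSubfamily a) +
              p a * familyWeight p s (𝒜.memberSubfamily a).shadow) *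
            ((1 - p a) * levelWeight p s (k + 1) + p a * levelWeight p s k) := by
          rw [familyWeight_insert ha, levelWeight_insert ha]
          refine mixture_mul_le_mixture_mul hq hpa₀.le (levelWeight_nonneg hps₀ _)
            (levelWeight_pos hps (by omega)) (levelWeight_nonneg hps₀ _)
            (h₀.trans (mul_le_mul_of_nonneg_right (familyWeight_mono hps₀ subset_union_left)
              (levelWeight_nonneg hps₀ _)))
            h₁ (familyWeight_mono hps₀ subset_union_right) hM
      _ ≤ familyWeight p (insert a s) 𝒜.shadow * levelWeight p (insert a s) (k + 1) := by
          rw [familyWeight_insert ha, levelWeight_insert ha, add_sub_cancel_right]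
          refine mul_le_mul_of_nonneg_right (add_le_add ?_ ?_) ?_
          · exact mul_le_mul_of_nonneg_left (familyWeight_mono hps₀
              shadow_nonMemberSubfamily_union_memberSubfamily_subset) hq
          · exact mul_le_mul_of_nonneg_left (familyWeight_mono hps₀
              shadow_memberSubfamily_subset) hpa₀.le
          · exact add_nonneg (mul_nonneg hq (levelWeight_nonneg hps₀ _))
              (mul_nonneg hpa₀.le (levelWeight_nonneg hps₀ _))

lemma falling_subset_powersetCard (h𝒜s : ∀ T ∈ 𝒜, T ⊆ s) (m : ℕ) :
    falling m 𝒜 ⊆ s.powersetCard m := fun T hT => by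
  obtain ⟨⟨t, ht, hTt⟩, hT⟩ := mem_falling.1 hT
  exact mem_powersetCard.2 ⟨hTt.trans (h𝒜s t ht), hT⟩

lemma sum_slice_div_levelWeight_le_falling (hp : ∀ i ∈ s, p i ∈ Set.Ioo 0 1)
    (h𝒜 : IsAntichain (· ⊆ ·) (𝒜 : Set (Finset ι))) (h𝒜s : ∀ T ∈ 𝒜, T ⊆ s) {m : ℕ}
    (hm : m ≤ #s) :
    ∑ r ∈ Ico m (#s + 1), familyWeight p s (𝒜 # r) / levelWeight p s r ≤
      familyWeight p s (falling m 𝒜) / levelWeight p s m := by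
  have hp₀ : ∀ i ∈ s, p i ∈ Set.Icc 0 1 := fun i hi => Set.Ioo_subset_Icc_self (hp i hi)
  induction hm using Nat.decreasingInduction with
  | self =>
    rw [Nat.Ico_succ_singleton, sum_singleton]
    exact div_le_div_of_nonneg_right (familyWeight_mono hp₀ (slice_subset_falling _ _))
      (levelWeight_nonneg hp₀ _)
  | of_succ m hm ih =>
    have hmatch : familyWeight p s (falling (m + 1) 𝒜) / levelWeight p s (m + 1 : ℕ) ≤
        familyWeight p s (falling (m + 1) 𝒜).shadow / levelWeight p s m := by
      rw [div_le_div_iff₀ (levelWeight_pos hp hm) (levelWeight_pos hp hm.le), Nat.cast_succ]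
      exact familyWeight_mul_levelWeight_le_shadow hp (falling_subset_powersetCard h𝒜s _)
    rw [sum_eq_sum_Ico_succ_bot (by omega), ← slice_union_shadow_falling_succ,
      familyWeight_union h𝒜.disjoint_slice_shadow_falling, add_div]
    exact add_le_add_right (ih.trans hmatch) _

theorem sum_slice_div_levelWeight_le_one (hp : ∀ i ∈ s, p i ∈ Set.Ioo 0 1)
    (h𝒜 : IsAntichain (· ⊆ ·) (𝒜 : Set (Finset ι))) (h𝒜s : ∀ T ∈ 𝒜, T ⊆ s) :
    ∑ r ∈ range (#s + 1), familyWeight p s (𝒜 # r) / levelWeight p s r ≤ 1 := by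
  have hp₀ : ∀ i ∈ s, p i ∈ Set.Icc 0 1 := fun i hi => Set.Ioo_subset_Icc_self (hp i hi)
  rw [range_eq_Ico]
  refine (sum_slice_div_levelWeight_le_falling hp h𝒜 h𝒜s (Nat.zero_le _)).trans ?_
  rw [div_le_one (levelWeight_pos hp (Nat.zero_le _))]
  exact familyWeight_le_levelWeight hp₀ (falling_subset_powersetCard h𝒜s _)

theorem _root_.IsAntichain.exists_familyWeight_le_levelWeight_of_mem_Ioo
    (hp : ∀ i ∈ s, p i ∈ Set.Ioo 0 1) (h𝒜 : IsAntichain (· ⊆ ·) (𝒜 : Set (Finset ι)))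
    (h𝒜s : ∀ T ∈ 𝒜, T ⊆ s) : ∃ k ≤ #s, familyWeight p s 𝒜 ≤ levelWeight p s k := by
  have hp₀ : ∀ i ∈ s, p i ∈ Set.Icc 0 1 := fun i hi => Set.Ioo_subset_Icc_self (hp i hi)
  obtain ⟨k, hk, hmax⟩ := exists_max_image (range (#s + 1)) (fun r : ℕ => levelWeight p s r)
    nonempty_range_add_one
  refine ⟨k, Nat.lt_succ_iff.1 (mem_range.1 hk), ?_⟩
  have hslices : familyWeight p s 𝒜 = ∑ r ∈ range (#s + 1), familyWeight p s (𝒜 # r) :=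
    (sum_fiberwise_of_maps_to fun T hT => mem_range.2 <|
      Nat.lt_succ_of_le (card_le_card (h𝒜s T hT))) _ |>.symm
  set ratio : ℕ → ℝ := fun r => familyWeight p s (𝒜 # r) / levelWeight p s r
  calc familyWeight p s 𝒜
      = ∑ r ∈ range (#s + 1), levelWeight p s r * ratio r := by
        rw [hslices]
        refine sum_congr rfl fun r hr => (mul_div_cancel₀ _ ?_).symm
        exact (levelWeight_pos hp (Nat.lt_succ_iff.1 (mem_range.1 hr))).ne'
    _ ≤ ∑ r ∈ range (#s + 1), levelWeight p s k * ratio r := by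
        refine sum_le_sum fun r hr => mul_le_mul_of_nonneg_right (hmax r hr) ?_
        exact div_nonneg (familyWeight_nonneg hp₀ _) (levelWeight_nonneg hp₀ _)
    _ ≤ levelWeight p s k := by
        rw [← mul_sum]
        exact mul_le_of_le_one_right (levelWeight_nonneg hp₀ _)
          (sum_slice_div_levelWeight_le_one hp h𝒜 h𝒜s)

open Filter Topology in
theorem _root_.IsAntichain.exists_familyWeight_le_levelWeight (hp : ∀ i ∈ s, p i ∈ Set.Icc 0 1)
    (h𝒜 : IsAntichain (· ⊆ ·) (𝒜 : Set (Finset ι))) (h𝒜s : ∀ T ∈ 𝒜, T ⊆ s) :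
    ∃ k ≤ #s, familyWeight p s 𝒜 ≤ levelWeight p s k := by
  by_contra! hlt
  -- Perturb `p` into the open cube, where the strict inequalities persist by continuity.
  set q : ℝ → ι → ℝ := fun t i => (1 - t) * p i + t / 2
  have hq : ∀ t ∈ Set.Ioo (0 : ℝ) 1, ∀ i ∈ s, q t i ∈ Set.Ioo 0 1 := fun t ⟨ht₀, ht₁⟩ i hi => by
    obtain ⟨hpi₀, hpi₁⟩ := hp i hi
    simp only [q, Set.mem_Ioo]
    constructor <;> nlinarith
  have hlim : ∀ ℬ, Tendsto (fun t => familyWeight (q t) s ℬ) (𝓝[>] 0)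
      (𝓝 (familyWeight p s ℬ)) := by
    intro ℬ
    have hcont : Continuous fun t => familyWeight (q t) s ℬ := by
      refine continuous_finsetSum _ fun T _ => continuous_finsetProd _ fun i _ => ?_
      split_ifs <;> fun_prop
    simpa [q] using hcont.tendsto 0 |>.mono_left nhdsWithin_le_nhds
  have hsmall : ∀ᶠ t in 𝓝[>] (0 : ℝ), t ∈ Set.Ioo 0 1 := Ioo_mem_nhdsGT one_pos
  have hevent : ∀ᶠ t in 𝓝[>] 0, t ∈ Set.Ioo 0 1 ∧
      ∀ k ∈ range (#s + 1), levelWeight (q t) s k < familyWeight (q t) s 𝒜 :=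
    hsmall.and <| (eventually_all_finset _).2 fun k hk =>
      (hlim _).eventually_lt (hlim 𝒜) (hlt k (Nat.lt_succ_iff.1 (mem_range.1 hk)))
  obtain ⟨t, ht, htlt⟩ := hevent.exists
  obtain ⟨k, hk, hle⟩ := h𝒜.exists_familyWeight_le_levelWeight_of_mem_Ioo (hq t ht) h𝒜s
  exact (htlt k (mem_range.2 (Nat.lt_succ_of_le hk))).not_ge hle

section Probability

variable {Ω : Type*} [Fintype ι] {B : ι → Ω → ℝ}

lemma setOf_filter_eq_one_eq_biInter (hB01 : ∀ i ω, B i ω = 0 ∨ B i ω = 1) (T : Finset ι) :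
    {ω | ({i | B i ω = 1} : Finset ι) = T} =
      ⋂ i ∈ (univ : Finset ι), B i ⁻¹' {if i ∈ T then 1 else 0} := by
  ext ω
  simp only [Set.mem_ofPred_eq, Finset.ext_iff, mem_filter, mem_univ, true_and, Set.mem_iInter,
    Set.mem_preimage, Set.mem_singleton_iff, forall_const]
  refine forall_congr' fun i => ?_
  rcases hB01 i ω with h | h <;> split_ifs <;> simp_all

variable [MeasurableSpace Ω] {μ : Measure Ω} [IsProbabilityMeasure μ]

lemma measureReal_filter_eq_one_eq_cubeWeight (hBm : ∀ i, Measurable (B i))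
    (hB01 : ∀ i ω, B i ω = 0 ∨ B i ω = 1) (hindep : iIndepFun B μ) (T : Finset ι) :
    μ.real {ω | ({i | B i ω = 1} : Finset ι) = T} =
      cubeWeight (fun i => μ.real {ω | B i ω = 1}) univ T := by
  rw [setOf_filter_eq_one_eq_biInter hB01, measureReal_def,
    hindep.measure_inter_preimage_eq_mul _ fun i _ => measurableSet_singleton _,
    ENNReal.toReal_prod]
  refine prod_congr rfl fun i _ => ?_
  split_ifs
  · rfl
  · have hcompl : B i ⁻¹' {0} = {ω | B i ω = 1}ᶜ := by
      ext ω
      rcases hB01 i ω with h | h <;> simp [h]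
    rw [← measureReal_def, hcompl]
    exact probReal_compl_eq_one_sub (hBm i (measurableSet_singleton 1))

lemma measureReal_sum_mul_eq (hBm : ∀ i, Measurable (B i))
    (hB01 : ∀ i ω, B i ω = 0 ∨ B i ω = 1) (hindep : iIndepFun B μ) (f : ι → ℝ) (x : ℝ) :
    μ.real {ω | ∑ i, f i * B i ω = x} =
      familyWeight (fun i => μ.real {ω | B i ω = 1}) univ {T | ∑ i ∈ T, f i = x} := by
  set S : Ω → Finset ι := fun ω => {i | B i ω = 1}
  have hevent : {ω | ∑ i, f i * B i ω = x} = S ⁻¹' ↑({T | ∑ i ∈ T, f i = x} : Finset _) := by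
    ext ω
    suffices ∑ i, f i * B i ω = ∑ i ∈ S ω, f i by simp [this]
    rw [sum_filter]
    refine sum_congr rfl fun i _ => ?_
    rcases hB01 i ω with h | h <;> simp [h]
  have hfiber : ∀ T, MeasurableSet (S ⁻¹' {T}) := fun T => by
    change MeasurableSet {ω | ({i | B i ω = 1} : Finset ι) = T}
    rw [setOf_filter_eq_one_eq_biInter hB01]
    exact Finset.measurableSet_biInter _ fun i _ => hBm i (measurableSet_singleton _)
  rw [hevent, familyWeight, ← sum_measureReal_preimage_singleton _ fun T _ => hfiber T]
  exact sum_congr rfl fun T _ => measureReal_filter_eq_one_eq_cubeWeight hBm hB01 hindep T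

theorem exists_measureReal_sum_mul_eq_le (hBm : ∀ i, Measurable (B i))
    (hB01 : ∀ i ω, B i ω = 0 ∨ B i ω = 1) (hindep : iIndepFun B μ) {w : ι → ℝ}
    (hw : ∀ i, 0 < w i) (y : ℝ) :
    ∃ k : ℕ, μ.real {ω | ∑ i, w i * B i ω = y} ≤ μ.real {ω | ∑ i, B i ω = k} := by
  have hanti : IsAntichain (· ⊆ ·)
      (({T | ∑ i ∈ T, w i = y} : Finset (Finset ι)) : Set (Finset ι)) := by
    intro T hT T' hT' hne hsub
    simp only [coe_filter, mem_univ, true_and, Set.mem_ofPred_eq] at hT hT'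
    obtain ⟨i, hiT', hiT⟩ := exists_of_ssubset (ssubset_of_subset_of_ne hsub hne)
    have := sum_lt_sum_of_subset hsub hiT' hiT (hw i) fun j _ _ => (hw j).le
    linarith
  obtain ⟨k, -, hk⟩ := hanti.exists_familyWeight_le_levelWeight
    (p := fun i => μ.real {ω | B i ω = 1}) (fun _ _ => ⟨measureReal_nonneg, measureReal_le_one⟩)
    fun T _ => subset_univ T
  refine ⟨k, ?_⟩
  have hlevel := measureReal_sum_mul_eq hBm hB01 hindep (fun _ => 1) k
  simp only [one_mul] at hlevel
  rw [measureReal_sum_mul_eq hBm hB01 hindep, hlevel]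
  refine hk.trans_eq ?_
  rw [levelWeight]
  congr 1
  ext T
  simp

theorem exists_signs_measureReal_sum_mul_eq_le (hBm : ∀ i, Measurable (B i))
    (hB01 : ∀ i ω, B i ω = 0 ∨ B i ω = 1) (hindep : iIndepFun B μ) {v : ι → ℝ}
    (hv : ∀ i, v i ≠ 0) :
    ∃ a : ι → ℝ, (∀ i, a i = 1 ∨ a i = -1) ∧ ∀ x, ∃ y,
      μ.real {ω | ∑ i, v i * B i ω = x} ≤ μ.real {ω | ∑ i, a i * B i ω = y} := by
  refine ⟨fun i => if v i < 0 then -1 else 1, fun i => by by_cases h : v i < 0 <;> simp [h],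
    fun x => ?_⟩
  set B' : ι → Ω → ℝ := fun i => (fun b => if v i < 0 then 1 - b else b) ∘ B i
  have hB'm : ∀ i, Measurable (B' i) := fun i => by
    by_cases h : v i < 0 <;> simp only [B', h, if_true, if_false] <;> fun_prop
  have hB'01 : ∀ i ω, B' i ω = 0 ∨ B' i ω = 1 := fun i ω => by
    rcases hB01 i ω with h | h <;> by_cases hvi : v i < 0 <;> simp [B', h, hvi]
  have hB'indep : iIndepFun B' μ := hindep.comp _ fun i => by
    by_cases h : v i < 0 <;> simp only [h, if_true, if_false] <;> fun_prop
  obtain ⟨k, hk⟩ := exists_measureReal_sum_mul_eq_le hB'm hB'01 hB'indep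
    (w := fun i => |v i|) (fun i => abs_pos.2 (hv i)) (x + ∑ i, if v i < 0 then |v i| else 0)
  refine ⟨k - ∑ i, if v i < 0 then 1 else 0, ?_⟩
  have hv_flip : ∀ ω, ∑ i, v i * B i ω =
      ∑ i, |v i| * B' i ω - ∑ i, if v i < 0 then |v i| else 0 := fun ω => by
    rw [← sum_sub_distrib]
    refine sum_congr rfl fun i _ => ?_
    by_cases h : v i < 0 <;> simp only [B', Function.comp_apply, h, if_true, if_false]
    · rw [abs_of_neg h]; ring
    · rw [abs_of_nonneg (not_lt.1 h)]; ring
  have ha_flip : ∀ ω, ∑ i, (if v i < 0 then -1 else 1) * B i ω =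
      ∑ i, B' i ω - ∑ i, if v i < 0 then 1 else 0 := fun ω => by
    rw [← sum_sub_distrib]
    refine sum_congr rfl fun i _ => ?_
    by_cases h : v i < 0 <;> simp only [B', Function.comp_apply, h, if_true, if_false] <;> ring
  simp_rw [hv_flip, ha_flip, sub_eq_iff_eq_add, sub_add_cancel]
  exact hk

end Probability

end LittlewoodOfford

/-- **reduction of the Littlewood–Offord problem to `±1` coefficients.**
For mutually independent Bernoulli random variables `B_1, …, B_n` (taking only the
values `0` and `1`) and nonzero reals `v_1, …, v_n`,
`sup_x P(v_1B_1 + ⋯ + v_nB_n = x) ≤ max_{a ∈ {−1,1}^n} sup_x P(a_1B_1 + ⋯ + a_nB_n = x)`. -/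
theorem littlewood_offord_reduction
    {Ω : Type*} [MeasureSpace Ω] [IsProbabilityMeasure (ℙ : Measure Ω)]
    (n : ℕ) (B : Fin n → Ω → ℝ) (hBm : ∀ i, Measurable (B i))
    (hB01 : ∀ i ω, B i ω = 0 ∨ B i ω = 1)
    (hindep : iIndepFun B ℙ)
    (v : Fin n → ℝ) (hv : ∀ i, v i ≠ 0) :
    (⨆ x : ℝ, (ℙ {ω | ∑ i, v i * B i ω = x}).toReal) ≤
      ⨆ a : {a : Fin n → ℝ // ∀ i, a i = 1 ∨ a i = -1},
        ⨆ x : ℝ, (ℙ {ω | ∑ i, (a : Fin n → ℝ) i * B i ω = x}).toReal := by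
  obtain ⟨a, ha, hdom⟩ :=
    LittlewoodOfford.exists_signs_measureReal_sum_mul_eq_le hBm hB01 hindep hv
  have hbdd : ∀ c : Fin n → ℝ,
      BddAbove (Set.range fun x : ℝ => (ℙ {ω | ∑ i, c i * B i ω = x}).toReal) :=
    fun c => ⟨1, by rintro _ ⟨x, rfl⟩; exact measureReal_le_one⟩
  refine ciSup_le fun x => ?_
  obtain ⟨y, hy⟩ := hdom x
  calc (ℙ {ω | ∑ i, v i * B i ω = x}).toReal
      ≤ (ℙ {ω | ∑ i, a i * B i ω = y}).toReal := hy
    _ ≤ ⨆ y : ℝ, (ℙ {ω | ∑ i, a i * B i ω = y}).toReal := le_ciSup (hbdd a) y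
    _ ≤ _ := le_ciSup (f := fun a' : {a : Fin n → ℝ // ∀ i, a i = 1 ∨ a i = -1} =>
          ⨆ y : ℝ, (ℙ {ω | ∑ i, (a' : Fin n → ℝ) i * B i ω = y}).toReal)
        ⟨1, by rintro _ ⟨a', rfl⟩; exact ciSup_le fun y => measureReal_le_one⟩ ⟨a, ha⟩
end
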